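/- arXiv:2407.00403 — 4 statements merged into one kernel-verified Lean document; each statement's English description precedes it below -/
import Mathlib

section
/- Let l ≥ 1 (q = p^l), let s = (s_1,…,s_d) be an index, and let u = (u_1,…,u_d) ∈ Kbar[t]^d. If ‖u_k‖∞ < |θ|∞^{s_k·q/(q−1)} for every 1 ≤ k ≤ d, then the series L_{l,u,s} converges in the Tate algebra T; that is, expanding each term of the defining series as a power series on the closed unit disk and summing, one obtains a power series Σ_{i≥0} a_i t^i with a_i ∈ C∞ and |a_i|∞ → 0. -/
/-!
Shared setup.  The field `C` plays the role of `ℂ_∞`: the completion of a fixed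
algebraic closure of `𝔽_p((1/θ))`, an algebraically closed, perfect, complete
nonarchimedean valued field of characteristic `p`.  It is axiomatized by its
characterizing properties: an algebraically closed perfect field `C` of
characteristic `p` together with a nonarchimedean absolute value `abv` for which `C`
is complete and with a distinguished element `θ` satisfying `abv θ = p` (the latter
hypotheses appear explicitly in the theorems below).
-/

namespace Carlitz

noncomputable section

open Filter Polynomial

variable (C : Type) [Field C] (p : ℕ) [Fact p.Prime] [CharP C p]

/-- The finite subfield `𝔽_{p^l}` of `C`: the fixed points of the `l`-th iterate of
the Frobenius. -/
def Fq (l : ℕ) : Subfield C where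
  carrier := {x : C | x ^ p ^ l = x}
  mul_mem' := by
    intro a b ha hb
    simp only [Set.mem_setOf_eq] at *
    rw [mul_pow, ha, hb]
  one_mem' := by simp
  add_mem' := by
    intro a b ha hb
    simp only [Set.mem_setOf_eq] at *
    have h := map_add (iterateFrobenius C p l) a b
    simp only [iterateFrobenius_def] at h
    rw [h, ha, hb]
  zero_mem' := by
    simp only [Set.mem_setOf_eq]
    exact zero_pow (pow_pos (Nat.Prime.pos Fact.out) l).ne'
  neg_mem' := by
    intro a ha
    simp only [Set.mem_setOf_eq] at *
    have h := map_neg (iterateFrobenius C p l) a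
    simp only [iterateFrobenius_def] at h
    rw [h, ha]
  inv_mem' := by
    intro a ha
    simp only [Set.mem_setOf_eq] at *
    rw [inv_pow, ha]

variable {C}

section Abv

variable (abv : AbsoluteValue C ℝ)

/-- `abv` is nonarchimedean. -/
def IsNonarch : Prop := ∀ x y : C, abv (x + y) ≤ max (abv x) (abv y)

/-- Convergence of a sequence with respect to `abv`. -/
def TendstoAbv (f : ℕ → C) (x : C) : Prop :=
  ∀ ε : ℝ, 0 < ε → ∃ N : ℕ, ∀ n, N ≤ n → abv (f n - x) < ε

/-- Unconditional summability of a family with respect to `abv`, with sum `S`. -/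
def HasAbvSum {ι : Type} (f : ι → C) (S : C) : Prop :=
  ∀ ε : ℝ, 0 < ε → ∃ F : Finset ι, ∀ G : Finset ι, F ⊆ G → abv ((∑ i ∈ G, f i) - S) < ε

/-- `C` is complete with respect to `abv`. -/
def AbvComplete : Prop :=
  ∀ f : ℕ → C, (∀ ε : ℝ, 0 < ε → ∃ N : ℕ, ∀ m, N ≤ m → ∀ n, N ≤ n → abv (f m - f n) < ε) →
    ∃ x : C, TendstoAbv abv f x

end Abv

/-- The rational function field `K = 𝔽_p(θ)`: the subfield of `C` generated by `θ`
(it automatically contains the prime field `𝔽_p`). -/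
def Kzero (θ : C) : Subfield C := Subfield.closure {θ}

/-- `K̄`: the algebraic closure of `K = 𝔽_p(θ)` inside `C`, i.e. the subfield of all
elements of `C` that are algebraic over `K`. -/
def Kbar (θ : C) : Subfield C :=
  Subfield.closure {x : C | IsAlgebraic (Kzero θ) x}

/-- The transcendence degree, over a subfield `K` of `C`, of the subfield of `C`
generated by `K` and a set `S`: the supremum of the cardinalities of its finite
subsets that are algebraically independent over `K`. -/
def trdegOver (K : Subfield C) (S : Set C) : ℕ :=
  sSup {n : ℕ | ∃ T : Finset C, ↑T ⊆ (Subfield.closure ((K : Set C) ∪ S) : Set C) ∧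
    T.card = n ∧ AlgebraicIndependent K (fun x : (T : Set C) => (x : C))}

/-- An index `(s_1, …, s_d)`: a nonempty finite tuple of positive integers, encoded
as a (nonempty) list. -/
abbrev Index : Type := List ℕ+

/-- `Sub`-closedness of a finite set of indices: membership is closed under passing to
nonempty contiguous subtuples (`Sub(𝐬) = {(s_i, …, s_j) | 1 ≤ i ≤ j ≤ d}`). -/
def SubClosed (I : Finset Index) : Prop :=
  ∀ s ∈ I, ∀ t : Index, t <:+: s → t ≠ [] → t ∈ I

/-- One term `a_1^{-s_1} ⋯ a_d^{-s_d}` of a multiple zeta value, the monic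
polynomials `a_i ∈ 𝔽_{p^l}[θ]` being evaluated at `θ ∈ C`. -/
def mzvTerm (θ : C) (l : ℕ) (s : Index) (a : Fin s.length → Polynomial (Fq C p l)) : C :=
  ∏ i, (Polynomial.eval₂ (Fq C p l).subtype θ (a i) ^ (s.get i : ℕ))⁻¹

/-- The tuples `(a_1, …, a_d)` of monic polynomials in `𝔽_{p^l}[θ]` with
`deg a_1 > ⋯ > deg a_d ≥ 0`. -/
def MZVTuples (l d : ℕ) : Type :=
  {a : Fin d → Polynomial (Fq C p l) // (∀ i, (a i).Monic) ∧
    StrictAnti fun i => (a i).natDegree}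

/-- `z` is the multiple zeta value `ζ_l(s_1, …, s_d)`: the (unconditional) sum of the
family of terms `a_1^{-s_1} ⋯ a_d^{-s_d}` over all tuples of monic polynomials in
`𝔽_{p^l}[θ]` with strictly decreasing degrees. -/
def IsMZV (abv : AbsoluteValue C ℝ) (θ : C) (l : ℕ) (s : Index) (z : C) : Prop :=
  HasAbvSum abv (fun a : MZVTuples (C := C) p l s.length => mzvTerm p θ l s a.1) z

/-- The partial products of the infinite product defining `Ω_l`, evaluated at `t = θ`;
`β` is the fixed `(q-1)`-st root of `-θ`, so that `(-θ)^{-q/(q-1)} = (β^q)⁻¹`. -/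
def omegaAtThetaPartial (θ : C) (l : ℕ) (β : C) (N : ℕ) : C :=
  (β ^ p ^ l)⁻¹ * ∏ i ∈ Finset.range N, (1 - θ * (θ ^ (p ^ l) ^ (i + 1))⁻¹)

/-- `w` is the value `Ω_l(θ)`: the limit of the partial products of the infinite
product defining `Ω_l`, evaluated at `t = θ`. -/
def IsOmegaAtTheta (abv : AbsoluteValue C ℝ) (θ : C) (l : ℕ) (β : C) (w : C) : Prop :=
  TendstoAbv abv (omegaAtThetaPartial p θ l β) w

/-- `π` is the Carlitz period `π̃_l = Ω_l(θ)⁻¹` (for a choice of `(q-1)`-st root `β`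
of `-θ`). -/
def IsCarlitzPeriod (abv : AbsoluteValue C ℝ) (θ : C) (l : ℕ) (π : C) : Prop :=
  ∃ β w : C, β ^ (p ^ l - 1) = -θ ∧ IsOmegaAtTheta p abv θ l β w ∧ w ≠ 0 ∧ π = w⁻¹

/-- Membership in the Laurent series subfield `𝔽_{p^l}((1/θ)) ⊆ C`: `x` is a
convergent sum `∑_{i ≤ N} c_i θ^i` with coefficients `c_i ∈ 𝔽_{p^l}`. -/
def InLaurentField (abv : AbsoluteValue C ℝ) (θ : C) (l : ℕ) (x : C) : Prop :=
  ∃ (N : ℤ) (c : ℤ → C), (∀ i, c i ∈ Fq C p l) ∧ (∀ i : ℤ, N < i → c i = 0) ∧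
    HasAbvSum abv (fun i : ℤ => c i * θ ^ i) x

section Twist

variable [PerfectRing C p]

/-- The `n`-fold twist on elements of `C`: `x ↦ x^{p^n}` for `n ∈ ℤ` (using
perfectness for negative `n`). -/
def twistHom (n : ℤ) : C →+* C := ((frobeniusEquiv C p ^ n : C ≃+* C) : C →+* C)

/-- The `n`-fold twist `f ↦ f^{(n)}` on power series:
`(∑ a_i t^i)^{(n)} = ∑ a_i^{p^n} t^i`. -/
def twistPS (n : ℤ) : PowerSeries C →+* PowerSeries C := PowerSeries.map (twistHom p n)

/-- The `n`-fold twist on polynomials. -/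
def twistPoly (n : ℤ) : Polynomial C →+* Polynomial C := Polynomial.mapRingHom (twistHom p n)

/-- The `n`-fold twist on formal Laurent series. -/
def twistLS (n : ℤ) (f : LaurentSeries C) : LaurentSeries C := f.map (twistHom p n)

end Twist

/-- The `N`-th partial product of the infinite product defining `Ω_l`, as a power
series; `β` is the fixed `(q-1)`-st root of `-θ`, so `(-θ)^{-q/(q-1)} = (β^q)⁻¹`. -/
def omegaPartial (θ : C) (l : ℕ) (β : C) (N : ℕ) : PowerSeries C :=
  PowerSeries.C (β ^ p ^ l)⁻¹ *
    ∏ i ∈ Finset.range N, (1 - PowerSeries.C (θ ^ (p ^ l) ^ (i + 1))⁻¹ * PowerSeries.X)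

/-- `Ω` is the power series `Ω_l(t) ∈ C[[t]]`: the infinite product converges
coefficientwise to `Ω`. -/
def IsOmega (abv : AbsoluteValue C ℝ) (θ : C) (l : ℕ) (β : C) (Ω : PowerSeries C) : Prop :=
  ∀ n : ℕ, ∀ ε : ℝ, 0 < ε → ∃ M : ℕ, ∀ N, M ≤ N →
    abv (PowerSeries.coeff n (omegaPartial p θ l β N) - PowerSeries.coeff n Ω) < ε

/-- `x` is the value `f(θ)` of a power series `f` at `t = θ` (a convergent sum in `C`). -/
def EvalAtTheta (abv : AbsoluteValue C ℝ) (θ : C) (f : PowerSeries C) (x : C) : Prop :=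
  HasAbvSum abv (fun n : ℕ => PowerSeries.coeff n f * θ ^ n) x

/-- Membership in the Tate algebra `𝕋 ⊆ C[[t]]`: the coefficients tend to `0`. -/
def InTate (abv : AbsoluteValue C ℝ) (f : PowerSeries C) : Prop :=
  Tendsto (fun n : ℕ => abv (PowerSeries.coeff n f)) atTop (nhds 0)

/-- Summability of a family of power series with respect to the Gauss sup-norm of the
Tate algebra, with sum `S`. -/
def HasSumTate (abv : AbsoluteValue C ℝ) {ι : Type} (f : ι → PowerSeries C)
    (S : PowerSeries C) : Prop :=
  ∀ ε : ℝ, 0 < ε → ∃ F : Finset ι, ∀ G : Finset ι, F ⊆ G → ∀ n : ℕ,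
    abv (PowerSeries.coeff n ((∑ i ∈ G, f i) - S)) < ε

/-- The subfield `L₂` is spanned over the subfield `L₁` by finitely many elements,
i.e. `L₂` is a finite extension of `L₁`. -/
def SpansFinitelyOver (L₁ L₂ : Subfield C) : Prop :=
  ∃ s : Finset C, ↑s ⊆ (L₂ : Set C) ∧
    ∀ x ∈ L₂, ∃ c : C → C, (∀ y, c y ∈ L₁) ∧ x = ∑ y ∈ s, c y * y

/-- The subfield `K_∞ = 𝔽_p((1/θ))` of `C`. -/
def Kinfty (abv : AbsoluteValue C ℝ) (θ : C) : Subfield C :=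
  Subfield.closure {x : C | InLaurentField p abv θ 1 x}

/-- A power series `∑ a_i t^i ∈ C[[t]]` is entire: `|a_i|^{1/i} → 0` and the
coefficients generate a finite field extension of `𝔽_p((1/θ))`. -/
def IsEntire (abv : AbsoluteValue C ℝ) (θ : C) (f : PowerSeries C) : Prop :=
  Tendsto (fun n : ℕ => abv (PowerSeries.coeff n f) ^ ((1 : ℝ) / n)) atTop (nhds 0) ∧
    SpansFinitelyOver (Kinfty p abv θ)
      (Subfield.closure ({x : C | InLaurentField p abv θ 1 x} ∪
        Set.range fun n : ℕ => PowerSeries.coeff n f))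

/-- Strictly decreasing tuples `i_1 > i_2 > ⋯ > i_d ≥ 0` of natural numbers. -/
def DecTuples (d : ℕ) : Type := {i : Fin d → ℕ // StrictAnti i}

section Polylog

variable [PerfectRing C p]

/-- One term of the `t`-motivic Carlitz multiple polylogarithm `L_{l,u,s}`, as a
power series (the factors `1/(t - θ^{q^k})` are expanded as power series on the
closed unit disk, i.e. inverted in `C[[t]]`). -/
def polylogTerm (θ : C) (l : ℕ) {d : ℕ} (s : Fin d → ℕ+) (u : Fin d → Polynomial C)
    (i : DecTuples d) : PowerSeries C :=
  (∏ k, (((u k).map (iterateFrobenius C p (i.1 k * l)) : Polynomial C) : PowerSeries C)) *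
    ((∏ k, (∏ j ∈ Finset.Icc 1 (i.1 k),
      (PowerSeries.X - PowerSeries.C (θ ^ (p ^ l) ^ j))) ^ (s k : ℕ)))⁻¹

/-- `Lser` is the `t`-motivic Carlitz multiple polylogarithm `L_{l,u,s}(t)`: the sum,
in the Tate algebra, of the family of its terms. -/
def IsPolylog (abv : AbsoluteValue C ℝ) (θ : C) (l : ℕ) {d : ℕ} (s : Fin d → ℕ+)
    (u : Fin d → Polynomial C) (Lser : PowerSeries C) : Prop :=
  HasSumTate abv (polylogTerm p θ l s u) Lser

/-- One term of the Carlitz multiple polylogarithm series, evaluated at `t = θ`. -/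
def polylogTermAtTheta (θ : C) (l : ℕ) {d : ℕ} (s : Fin d → ℕ+) (u : Fin d → Polynomial C)
    (i : DecTuples d) : C :=
  (∏ k, Polynomial.eval θ ((u k).map (iterateFrobenius C p (i.1 k * l)))) *
    ((∏ k, (∏ j ∈ Finset.Icc 1 (i.1 k), (θ - θ ^ (p ^ l) ^ j)) ^ (s k : ℕ)))⁻¹

end Polylog

/-- The Gauss-norm bound `‖u‖_∞ < |θ|_∞^{s·q/(q-1)}` (with `q = p^l`): every
coefficient of `u` has absolute value `< abv θ ^ (s·q/(q-1))`. -/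
def GaussBound (abv : AbsoluteValue C ℝ) (θ : C) (l : ℕ) (sk : ℕ) (u : Polynomial C) : Prop :=
  ∀ i : ℕ, abv (u.coeff i) < abv θ ^ (((sk : ℝ) * (p : ℝ) ^ l) / ((p : ℝ) ^ l - 1))

/-- All coefficients of the polynomial `u` lie in the subfield `K`. -/
def CoeffsIn (K : Subfield C) (u : Polynomial C) : Prop := ∀ i : ℕ, u.coeff i ∈ K

variable (C)

/-- For `l ≥ 1` the subfield `𝔽_{p^l} ⊆ C` is finite (it consists of roots of
`X^{p^l} - X`). -/
def fqFintype (l : ℕ) (hl : 0 < l) : Fintype (Fq C p l) := by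
  have hp1 : 1 < p ^ l := Nat.one_lt_pow hl.ne' (Nat.Prime.one_lt Fact.out)
  have hne : (Polynomial.X ^ p ^ l - Polynomial.X : Polynomial C) ≠ 0 := by
    intro h
    have h2 : (Polynomial.X ^ p ^ l : Polynomial C) = Polynomial.X := by
      rwa [sub_eq_zero] at h
    have h3 := congrArg Polynomial.natDegree h2
    rw [Polynomial.natDegree_X_pow, Polynomial.natDegree_X] at h3
    omega
  have hfin : ({x : C | x ^ p ^ l = x}).Finite := by
    refine (Polynomial.finite_setOf_isRoot hne).subset ?_
    intro x hx
    simp only [Set.mem_setOf_eq, Polynomial.IsRoot, Polynomial.eval_sub,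
      Polynomial.eval_pow, Polynomial.eval_X] at *
    rw [hx, sub_self]
  have hfin2 : ((Fq C p l : Set C)).Finite := hfin
  exact hfin2.fintype

/-- `D_i ∈ 𝔽_q[θ]`: the product of all monic polynomials of degree `i` over
`𝔽_q = 𝔽_{p^l}`, written as the product over all choices of the `i` lower
coefficients.  The indeterminate of `Polynomial (Fq C p l)` plays the role of `θ`. -/
def Dpoly (l : ℕ) (hl : 0 < l) (i : ℕ) : Polynomial (Fq C p l) :=
  letI := fqFintype C p l hl
  ∏ c : Fin i → Fq C p l,
    (Polynomial.X ^ i + ∑ j : Fin i, Polynomial.C (c j) * Polynomial.X ^ (j : ℕ))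

/-- The Carlitz factorial `Γ_{m+1} = ∏_i D_i^{m_{(i)}} ∈ 𝔽_q[θ]`, where
`m = ∑_i m_{(i)} q^i` is the `q`-adic expansion of `m`. -/
def gammaFact (l : ℕ) (hl : 0 < l) (m : ℕ) : Polynomial (Fq C p l) :=
  ∏ i ∈ Finset.range ((Nat.digits (p ^ l) m).length),
    Dpoly C p l hl i ^ ((Nat.digits (p ^ l) m).getD i 0)

/-- The ring `𝔽_q[θ][t]`: polynomials in `t` (the outer variable) over `𝔽_q[θ]`
(inner variable `θ`). -/
abbrev ATRing (l : ℕ) : Type := Polynomial (Polynomial (Fq C p l))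

/-- The fraction field `𝔽_q(θ, t)`. -/
abbrev ATField (l : ℕ) : Type := FractionRing (ATRing C p l)

/-- The coefficient `∏_{j=1}^{i}(t^{q^i} - θ^{q^j}) / ∏_{j=0}^{i-1}(t^{q^i} - t^{q^j})`
of `x^{q^i}` in the Anderson–Thakur generating series. -/
def atG (l : ℕ) (i : ℕ) : ATField C p l :=
  algebraMap (ATRing C p l) (ATField C p l)
      (∏ j ∈ Finset.Icc 1 i,
        (Polynomial.X ^ (p ^ l) ^ i - Polynomial.C Polynomial.X ^ (p ^ l) ^ j)) /
    algebraMap (ATRing C p l) (ATField C p l)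
      (∏ j ∈ Finset.range i, (Polynomial.X ^ (p ^ l) ^ i - Polynomial.X ^ (p ^ l) ^ j))

open scoped Classical in
/-- The series `1 - ∑_{i ≥ 0} [∏_{j=1}^{i}(t^{q^i} - θ^{q^j}) / ∏_{j=0}^{i-1}(t^{q^i} - t^{q^j})] x^{q^i}`,
a power series in `x` over `𝔽_q(θ, t)`. -/
def atBase (l : ℕ) : PowerSeries (ATField C p l) :=
  PowerSeries.mk fun k =>
    if k = 0 then 1
    else if h : ∃ i : ℕ, k = (p ^ l) ^ i then -(atG C p l (Nat.find h)) else 0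

/-- The Carlitz factorial `Γ_{m+1}|_{θ = t}`, i.e. with `θ` replaced by `t`, as an
element of `𝔽_q[θ][t]`. -/
def gammaAtT (l : ℕ) (hl : 0 < l) (m : ℕ) : ATRing C p l :=
  Polynomial.eval₂ ((Polynomial.C).comp (Polynomial.C)) Polynomial.X (gammaFact C p l hl m)

/-- `H : ℕ → 𝔽_q[θ][t]` is the family of Anderson–Thakur polynomials `(H_{l,s})_{s≥0}`:
it satisfies the generating identity
`(1 - ∑_{i≥0} [⋯] x^{q^i})⁻¹ = ∑_{s≥0} (H_s(t) / Γ_{s+1}|_{θ=t}) x^s`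
of power series in `x` over `𝔽_q(θ, t)`. -/
def IsATFamily (l : ℕ) (hl : 0 < l) (H : ℕ → ATRing C p l) : Prop :=
  (atBase C p l)⁻¹ =
    PowerSeries.mk fun s =>
      algebraMap (ATRing C p l) (ATField C p l) (H s) /
        algebraMap (ATRing C p l) (ATField C p l) (gammaAtT C p l hl s)

/-- The image in `C[t]` of `g(θ, t) ∈ 𝔽_q[θ][t]`, evaluating the variable `θ` at the
distinguished element `θ ∈ C`. -/
def toPolyC (θ : C) (l : ℕ) (g : ATRing C p l) : Polynomial C :=
  g.map (Polynomial.eval₂RingHom (Fq C p l).subtype θ)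

variable {C}

/-- The contiguous subtuple `(s_k, s_{k+1}, …, s_{j-1})` (0-based) of a tuple `s` of
length `d`, for `j ≤ d`. -/
def subTuple {α : Type} {d : ℕ} (s : Fin d → α) (k j : ℕ) (hj : j ≤ d) :
    Fin (j - k) → α :=
  fun m => s ⟨k + (m : ℕ), by have h := m.isLt; omega⟩

/-- The weight `s_k + s_{k+1} + ⋯ + s_{d-1}` (0-based) of the tail of an index. -/
def wtFrom {d : ℕ} (s : Fin d → ℕ+) (k : ℕ) : ℕ :=
  ∑ m : Fin d, if k ≤ (m : ℕ) then (s m : ℕ) else 0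

end

end Carlitz

/-!
Expanding `1/(t - θ^{q^j}) = -∑ₙ θ^{-q^j(n+1)} tⁿ` on the closed unit disk, every coefficient of
the term indexed by `i_1 > ⋯ > i_d` has absolute value at most
`∏ₖ ‖u_k‖^{q^{i_k}} |θ|^{-s_k(q + ⋯ + q^{i_k})} = ∏ₖ B_k (‖u_k‖ / B_k)^{q^{i_k}}`,
where `B_k = |θ|^{s_k q/(q-1)}`. As `‖u_k‖ < B_k`, these bounds tend to `0` along the cofinite
filter, so in the complete ultrametric field the terms are summable uniformly in the coefficients.
The sum is a uniform limit of power series whose coefficients tend to `0`, hence lies in `𝕋`.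
-/

namespace PowerSeries

open Filter Topology

section Ultrametric

variable {K : Type*} [NormedCommRing K] [IsUltrametricDist K]

theorem norm_coeff_mul_le {f g : K⟦X⟧} {a b : ℝ} (hf : ∀ n, ‖coeff n f‖ ≤ a)
    (hg : ∀ n, ‖coeff n g‖ ≤ b) (n : ℕ) : ‖coeff n (f * g)‖ ≤ a * b := by
  have ha : 0 ≤ a := (norm_nonneg _).trans (hf 0)
  have hb : 0 ≤ b := (norm_nonneg _).trans (hg 0)
  rw [coeff_mul]
  refine IsUltrametricDist.norm_sum_le_of_forall_le_of_nonneg (mul_nonneg ha hb) fun x _ => ?_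
  exact (norm_mul_le _ _).trans (mul_le_mul (hf _) (hg _) (norm_nonneg _) ha)

theorem norm_coeff_prod_le [NormOneClass K] {ι : Type*} (s : Finset ι) {f : ι → K⟦X⟧}
    {a : ι → ℝ} (hf : ∀ i ∈ s, ∀ n, ‖coeff n (f i)‖ ≤ a i) (n : ℕ) :
    ‖coeff n (∏ i ∈ s, f i)‖ ≤ ∏ i ∈ s, a i := by
  classical
  induction s using Finset.induction_on generalizing n with
  | empty =>
    rw [Finset.prod_empty, Finset.prod_empty, coeff_one]
    split_ifs <;> simp
  | insert i s hi ih =>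
    rw [Finset.prod_insert hi, Finset.prod_insert hi]
    exact norm_coeff_mul_le (hf i (Finset.mem_insert_self i s))
      (ih fun j hj => hf j (Finset.mem_insert_of_mem hj)) n

theorem norm_coeff_pow_le [NormOneClass K] {f : K⟦X⟧} {a : ℝ} (hf : ∀ n, ‖coeff n f‖ ≤ a)
    (m n : ℕ) : ‖coeff n (f ^ m)‖ ≤ a ^ m := by
  simpa using norm_coeff_prod_le (Finset.range m) (fun _ _ => hf) n

end Ultrametric

theorem isRestricted_coe {K : Type*} [NormedRing K] (c : ℝ) (P : Polynomial K) :
    IsRestricted c (P : K⟦X⟧) := by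
  induction P using Polynomial.induction_on' with
  | add P Q hP hQ => simpa using isRestricted.add c hP hQ
  | monomial n a => simpa using isRestricted_monomial c n a

section Field

variable {K : Type*} [Field K]

/-- `f⁻¹ = 0` when the constant coefficient of `f` vanishes, so inversion is multiplicative on
all of `K⟦X⟧`. -/
noncomputable def invMonoidHom : K⟦X⟧ →* K⟦X⟧ where
  toFun f := f⁻¹
  map_one' := by rw [PowerSeries.inv_eq_iff_mul_eq_one (by simp), one_mul]
  map_mul' f g := by rw [PowerSeries.mul_inv_rev, mul_comm]

theorem coeff_inv_X_sub_C {a : K} (ha : a ≠ 0) (n : ℕ) :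
    coeff n (X - C a)⁻¹ = -a⁻¹ ^ (n + 1) := by
  have h : (X - C a)⁻¹ = -invUnitsSub (Units.mk0 a ha) := by
    rw [PowerSeries.inv_eq_iff_mul_eq_one (by simp [ha]), neg_mul, ← mul_neg, neg_sub]
    exact invUnitsSub_mul_sub (Units.mk0 a ha)
  rw [h, map_neg, coeff_invUnitsSub]
  simp [Units.mk0]

end Field

section NormedField

variable {K : Type*} [NormedField K]

theorem norm_coeff_inv_X_sub_C_le {a : K} (ha : 1 ≤ ‖a‖) (n : ℕ) :
    ‖coeff n (X - C a)⁻¹‖ ≤ ‖a‖⁻¹ := by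
  have ha0 : a ≠ 0 := norm_pos_iff.1 (one_pos.trans_le ha)
  rw [coeff_inv_X_sub_C ha0, norm_neg, norm_pow, norm_inv]
  exact pow_le_of_le_one (by positivity) (inv_le_one_of_one_le₀ ha) n.succ_ne_zero

theorem isRestricted_inv_X_sub_C {a : K} (ha : 1 < ‖a‖) : IsRestricted 1 (X - C a)⁻¹ := by
  have ha0 : a ≠ 0 := norm_pos_iff.1 (one_pos.trans ha)
  rw [isRestricted_iff']
  simp only [coeff_inv_X_sub_C ha0, norm_neg, norm_pow, norm_inv, one_pow, mul_one]
  exact (tendsto_pow_atTop_nhds_zero_of_lt_one (by positivity) (inv_lt_one_of_one_lt₀ ha)).comp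
    (tendsto_add_atTop_nat 1)

end NormedField

section Complete

variable {K : Type*} [NormedRing K]

theorem isRestricted_one_iff {f : K⟦X⟧} :
    IsRestricted 1 f ↔ Tendsto (fun n => coeff n f) atTop (𝓝 0) := by
  simp [isRestricted_iff', tendsto_zero_iff_norm_tendsto_zero]

variable [IsUltrametricDist K] [CompleteSpace K]

theorem exists_isRestricted_sum_of_norm_coeff_le {ι : Type*} {f : ι → K⟦X⟧} {b : ι → ℝ}
    (hb : Tendsto b cofinite (𝓝 0)) (hfb : ∀ i n, ‖coeff n (f i)‖ ≤ b i)
    (hf : ∀ i, IsRestricted 1 (f i)) :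
    ∃ S : K⟦X⟧, (∀ ε > 0, ∃ F : Finset ι, ∀ G : Finset ι, F ⊆ G → ∀ n,
      ‖coeff n ((∑ i ∈ G, f i) - S)‖ < ε) ∧ IsRestricted 1 S := by
  have hsum : ∀ n, Summable fun i => coeff n (f i) := fun n =>
    NonarchimedeanAddGroup.summable_of_tendsto_cofinite_zero
      (squeeze_zero_norm (hfb · n) hb)
  set S : K⟦X⟧ := mk fun n => ∑' i, coeff n (f i)
  have htail : ∀ δ > 0, ∃ F : Finset ι, ∀ G : Finset ι, F ⊆ G → ∀ n,
      ‖coeff n ((∑ i ∈ G, f i) - S)‖ ≤ δ := by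
    intro δ hδ
    have hfin := eventually_cofinite.1 (hb.eventually (Iic_mem_nhds hδ))
    refine ⟨hfin.toFinset, fun G hG n => ?_⟩
    rw [map_sub, map_sum, coeff_mk, ← (hsum n).sum_add_tsum_compl (s := G), sub_add_cancel_left,
      norm_neg]
    refine IsUltrametricDist.norm_tsum_le_of_forall_le_of_nonneg hδ.le fun i => ?_
    refine (hfb i n).trans (not_not.1 fun h => i.2 (hG ?_))
    exact hfin.mem_toFinset.2 h
  refine ⟨S, fun ε hε => ?_, ?_⟩
  · obtain ⟨F, hF⟩ := htail (ε / 2) (half_pos hε)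
    exact ⟨F, fun G hG n => (hF G hG n).trans_lt (half_lt_self hε)⟩
  · rw [isRestricted_one_iff, NormedAddGroup.tendsto_nhds_zero]
    intro ε hε
    obtain ⟨F, hF⟩ := htail (ε / 2) (half_pos hε)
    have hP : ∑ i ∈ F, f i ∈ IsRestricted.addSubgroup (R := K) 1 :=
      AddSubgroup.sum_mem _ fun i _ => hf i
    filter_upwards [NormedAddGroup.tendsto_nhds_zero.1 (isRestricted_one_iff.1 hP) ε hε]
      with n hn
    calc ‖coeff n S‖ = ‖coeff n (∑ i ∈ F, f i) + -coeff n ((∑ i ∈ F, f i) - S)‖ := by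
          rw [map_sub, neg_sub, add_sub_cancel]
      _ ≤ max ‖coeff n (∑ i ∈ F, f i)‖ ‖coeff n ((∑ i ∈ F, f i) - S)‖ := by
          simpa only [norm_neg] using IsUltrametricDist.norm_add_le_max
            (coeff n (∑ i ∈ F, f i)) (-coeff n ((∑ i ∈ F, f i) - S))
      _ < ε := max_lt hn ((hF F le_rfl n).trans_lt (half_lt_self hε))

end Complete

end PowerSeries

section RealBounds

open Filter Topology

theorem tendsto_prod_apply_cofinite_zero {ι : Type*} [Fintype ι] {f : ι → ℕ → ℝ} {M : ι → ℝ}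
    (hf0 : ∀ k n, 0 ≤ f k n) (hfM : ∀ k n, f k n ≤ M k) (hf : ∀ k, Tendsto (f k) atTop (𝓝 0)) :
    Tendsto (fun i : ι → ℕ => ∏ k, f k (i k)) cofinite (𝓝 0) := by
  classical
  rw [← coprodᵢ_cofinite, Filter.coprodᵢ, tendsto_iSup]
  intro k
  have hk : Tendsto (fun i : ι → ℕ => f k (i k) * ∏ j ∈ Finset.univ.erase k, M j)
      (comap (Function.eval k) cofinite) (𝓝 0) := by
    rw [Nat.cofinite_eq_atTop]
    simpa using ((hf k).comp tendsto_comap).mul_const (∏ j ∈ Finset.univ.erase k, M j)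
  refine squeeze_zero (fun i => Finset.prod_nonneg fun j _ => hf0 j _) (fun i => ?_) hk
  rw [← Finset.mul_prod_erase Finset.univ _ (Finset.mem_univ k)]
  exact mul_le_mul_of_nonneg_left (Finset.prod_le_prod (fun j _ => hf0 j _) fun j _ => hfM j _)
    (hf0 k _)

theorem tendsto_prod_mul_div_pow_pow_cofinite_zero {ι : Type*} [Fintype ι] {R B : ι → ℝ}
    (hR : ∀ k, 0 ≤ R k) (hRB : ∀ k, R k < B k) {q : ℕ} (hq : 1 < q) :
    Tendsto (fun i : ι → ℕ => ∏ k, B k * (R k / B k) ^ q ^ i k) cofinite (𝓝 0) := by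
  have hB : ∀ k, 0 < B k := fun k => (hR k).trans_lt (hRB k)
  have hρ0 : ∀ k, 0 ≤ R k / B k := fun k => div_nonneg (hR k) (hB k).le
  have hρ1 : ∀ k, R k / B k < 1 := fun k => (div_lt_one (hB k)).2 (hRB k)
  refine tendsto_prod_apply_cofinite_zero (f := fun k n => B k * (R k / B k) ^ q ^ n)
    (fun k n => mul_nonneg (hB k).le (pow_nonneg (hρ0 k) _))
    (fun k n => mul_le_of_le_one_right (hB k).le (pow_le_one₀ (hρ0 k) (hρ1 k).le)) fun k => ?_
  simpa using ((tendsto_pow_atTop_nhds_zero_of_lt_one (hρ0 k) (hρ1 k)).comp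
    (tendsto_pow_atTop_atTop_of_one_lt hq)).const_mul (B k)

theorem rpow_pow_eq_mul_prod_pow {β : ℝ} (hβ : 0 < β) {q : ℕ} (hq : 1 < q) (s i : ℕ) :
    (β ^ ((s : ℝ) * q / (q - 1))) ^ q ^ i =
      β ^ ((s : ℝ) * q / (q - 1)) * (∏ j ∈ Finset.Icc 1 i, β ^ q ^ j) ^ s := by
  have hq' : (q : ℝ) - 1 ≠ 0 := by
    have : (1 : ℝ) < q := by exact_mod_cast hq
    linarith
  have hgeom : ∑ j ∈ Finset.Icc 1 i, (q : ℝ) ^ j = (q ^ (i + 1) - q) / (q - 1) := by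
    rw [eq_div_iff hq', ← Finset.Ico_add_one_right_eq_Icc, geom_sum_Ico_mul _ (by omega),
      pow_one]
  rw [Finset.prod_pow_eq_pow_sum, ← pow_mul, ← Real.rpow_natCast β, ← Real.rpow_natCast,
    ← Real.rpow_mul hβ.le, ← Real.rpow_add hβ]
  congr 1
  push_cast
  rw [hgeom]
  field_simp
  ring

end RealBounds

namespace Carlitz

open PowerSeries Filter Topology

theorem completeSpace_of_abvComplete {C : Type} [Field C] {abv : AbsoluteValue C ℝ}
    (h : AbvComplete abv) : letI := abv.toNormedField; CompleteSpace C := by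
  let := abv.toNormedField
  refine Metric.complete_of_cauchySeq_tendsto fun f hf => ?_
  obtain ⟨x, hx⟩ := h f fun ε hε => by
    obtain ⟨N, hN⟩ := Metric.cauchySeq_iff.1 hf ε hε
    exact ⟨N, fun m hm n hn => (dist_eq_norm (f m) (f n)).symm.trans_lt (hN m hm n hn)⟩
  refine ⟨x, Metric.tendsto_atTop.2 fun ε hε => ?_⟩
  obtain ⟨N, hN⟩ := hx ε hε
  exact ⟨N, fun n hn => (dist_eq_norm (f n) x).trans_lt (hN n hn)⟩

section Field

variable {C : Type} [Field C] (p : ℕ) [Fact p.Prime] [CharP C p]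

noncomputable def polylogFactor (θ : C) (l s : ℕ) (u : Polynomial C) (i : ℕ) : PowerSeries C :=
  (u.map (iterateFrobenius C p (i * l)) : PowerSeries C) *
    (∏ j ∈ Finset.Icc 1 i, (X - PowerSeries.C (θ ^ (p ^ l) ^ j))⁻¹) ^ s

theorem polylogTerm_eq_prod_polylogFactor (θ : C) (l : ℕ) {d : ℕ} (s : Fin d → ℕ+)
    (u : Fin d → Polynomial C) (i : DecTuples d) :
    polylogTerm p θ l s u i = ∏ k, polylogFactor p θ l (s k) (u k) (i.1 k) := by
  simp only [polylogTerm, polylogFactor, Finset.prod_mul_distrib]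
  congr 1
  change PowerSeries.invMonoidHom _ = _
  simp only [map_prod, map_pow]
  rfl

end Field

section Normed

variable {C : Type} [NormedField C] [IsUltrametricDist C] (p : ℕ) [Fact p.Prime] [CharP C p]
  {θ : C} (l : ℕ)

theorem isRestricted_polylogFactor (hθ : 1 < ‖θ‖) (s : ℕ) (u : Polynomial C) (i : ℕ) :
    IsRestricted 1 (polylogFactor p θ l s u i) := by
  have hq : p ^ l ≠ 0 := pow_ne_zero _ (Fact.out : p.Prime).ne_zero
  refine (IsRestricted.subring 1).mul_mem (isRestricted_coe 1 _)
    (pow_mem (prod_mem fun j _ => isRestricted_inv_X_sub_C ?_) _)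
  rw [norm_pow]
  exact one_lt_pow₀ hθ (pow_ne_zero _ hq)

theorem norm_coeff_polylogFactor_le (hθ : 1 < ‖θ‖) (hl : 0 < l) (s : ℕ) {u : Polynomial C}
    (i : ℕ) {R : ℝ} (hR : ∀ n, ‖u.coeff n‖ ≤ R) (n : ℕ) :
    ‖coeff n (polylogFactor p θ l s u i)‖ ≤
      ‖θ‖ ^ ((s : ℝ) * (p ^ l : ℕ) / ((p ^ l : ℕ) - 1)) *
        (R / ‖θ‖ ^ ((s : ℝ) * (p ^ l : ℕ) / ((p ^ l : ℕ) - 1))) ^ (p ^ l) ^ i := by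
  have hq : 1 < p ^ l := Nat.one_lt_pow hl.ne' (Fact.out : p.Prime).one_lt
  have hθ0 : 0 < ‖θ‖ := one_pos.trans hθ
  have hnum : ∀ n, ‖(u.map (iterateFrobenius C p (i * l))).coeff n‖ ≤ R ^ (p ^ l) ^ i := by
    intro n
    rw [Polynomial.coeff_map, iterateFrobenius_def, norm_pow, mul_comm, pow_mul]
    exact pow_le_pow_left₀ (norm_nonneg _) (hR n) _
  have hden : ∀ n, ‖coeff n ((∏ j ∈ Finset.Icc 1 i,
      (X - PowerSeries.C (θ ^ (p ^ l) ^ j))⁻¹) ^ s)‖ ≤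
      (∏ j ∈ Finset.Icc 1 i, ‖θ‖ ^ (p ^ l) ^ j)⁻¹ ^ s := by
    rw [← Finset.prod_inv_distrib]
    refine norm_coeff_pow_le (norm_coeff_prod_le _ fun j _ n => ?_) s
    rw [← norm_pow]
    refine norm_coeff_inv_X_sub_C_le ?_ n
    rw [norm_pow]
    exact one_le_pow₀ hθ.le
  refine (norm_coeff_mul_le (by simpa only [Polynomial.coeff_coe] using hnum) hden n).trans_eq ?_
  rw [div_pow, inv_pow, rpow_pow_eq_mul_prod_pow hθ0 hq]
  have : 0 < ∏ j ∈ Finset.Icc 1 i, ‖θ‖ ^ (p ^ l) ^ j := Finset.prod_pos fun j _ => by positivity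
  have : 0 < ‖θ‖ ^ ((s : ℝ) * (p ^ l : ℕ) / ((p ^ l : ℕ) - 1)) := by positivity
  field_simp

theorem isRestricted_polylogTerm (hθ : 1 < ‖θ‖) {d : ℕ} (s : Fin d → ℕ+)
    (u : Fin d → Polynomial C) (i : DecTuples d) :
    IsRestricted 1 (polylogTerm p θ l s u i) := by
  rw [polylogTerm_eq_prod_polylogFactor]
  exact (IsRestricted.subring (R := C) 1).prod_mem fun k _ =>
    isRestricted_polylogFactor p l hθ _ _ _

theorem norm_coeff_polylogTerm_le (hθ : 1 < ‖θ‖) (hl : 0 < l) {d : ℕ} (s : Fin d → ℕ+)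
    (u : Fin d → Polynomial C) {R : Fin d → ℝ} (hR : ∀ k n, ‖(u k).coeff n‖ ≤ R k)
    (i : DecTuples d) (n : ℕ) :
    ‖coeff n (polylogTerm p θ l s u i)‖ ≤
      ∏ k, ‖θ‖ ^ (((s k : ℕ) : ℝ) * (p ^ l : ℕ) / ((p ^ l : ℕ) - 1)) *
        (R k / ‖θ‖ ^ (((s k : ℕ) : ℝ) * (p ^ l : ℕ) / ((p ^ l : ℕ) - 1))) ^ (p ^ l) ^ i.1 k := by
  rw [polylogTerm_eq_prod_polylogFactor]
  exact norm_coeff_prod_le _ (fun k _ => norm_coeff_polylogFactor_le p l hθ hl _ _ (hR k)) n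

end Normed

theorem polylog_mem_tate_general
    (C : Type) [Field C] (p : ℕ) [Fact p.Prime] [CharP C p] (abv : AbsoluteValue C ℝ) (θ : C)
    (hna : IsNonarch abv) (hcomplete : AbvComplete abv) (habsθ : abv θ = p)
    (l : ℕ) (hl : 0 < l) (d : ℕ) (s : Fin d → ℕ+) (u : Fin d → Polynomial C)
    (huG : ∀ k, GaussBound p abv θ l (s k : ℕ) (u k)) :
    ∃ Lser : PowerSeries C, IsPolylog p abv θ l s u Lser ∧ InTate abv Lser := by
  let := abv.toNormedField
  have hnorm : ∀ x : C, ‖x‖ = abv x := fun _ => rfl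
  have : IsUltrametricDist C :=
    IsUltrametricDist.isUltrametricDist_of_forall_norm_add_le_max_norm hna
  have := completeSpace_of_abvComplete hcomplete
  have hθ : 1 < ‖θ‖ := by
    rw [hnorm, habsθ]
    exact_mod_cast (Fact.out : p.Prime).one_lt
  set R : Fin d → ℝ := fun k => (u k).gaussNorm abv 1
  have hR : ∀ k n, ‖(u k).coeff n‖ ≤ R k := fun k n => by
    simpa [hnorm] using (u k).le_gaussNorm abv zero_le_one n
  have hRB : ∀ k, R k < ‖θ‖ ^ (((s k : ℕ) : ℝ) * (p ^ l : ℕ) / ((p ^ l : ℕ) - 1)) := fun k => by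
    obtain ⟨n, hn⟩ := (u k).exists_eq_gaussNorm abv 1
    simpa [R, hn, hnorm] using huG k n
  obtain ⟨S, hS, hSr⟩ := exists_isRestricted_sum_of_norm_coeff_le
    ((tendsto_prod_mul_div_pow_pow_cofinite_zero (fun k => (norm_nonneg _).trans (hR k 0)) hRB
      (Nat.one_lt_pow hl.ne' (Fact.out : p.Prime).one_lt)).comp
        Subtype.val_injective.tendsto_cofinite)
    (norm_coeff_polylogTerm_le p l hθ hl s u hR) (isRestricted_polylogTerm p l hθ s u)
  exact ⟨S, hS, tendsto_zero_iff_norm_tendsto_zero.1 (isRestricted_one_iff.1 hSr)⟩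

/-- If `‖u_k‖_∞ < |θ|_∞^{s_k·q/(q-1)}` for all `k`, then the series
`L_{l,u,s}` converges in the Tate algebra `𝕋`: summing the terms (each expanded as a
power series on the closed unit disk) yields a power series whose coefficients tend
to `0`. -/
theorem polylog_mem_tate
    (C : Type) [Field C] (p : ℕ) [Fact p.Prime] [CharP C p] [PerfectRing C p]
    [IsAlgClosed C] (abv : AbsoluteValue C ℝ) (θ : C)
    (hna : IsNonarch abv) (hcomplete : AbvComplete abv) (habsθ : abv θ = p)
    (l : ℕ) (hl : 0 < l) (d : ℕ) (s : Fin d → ℕ+) (u : Fin d → Polynomial C)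
    (huK : ∀ k, CoeffsIn (Kbar θ) (u k))
    (huG : ∀ k, GaussBound p abv θ l (s k : ℕ) (u k)) :
    ∃ Lser : PowerSeries C, IsPolylog p abv θ l s u Lser ∧ InTate abv Lser :=
  polylog_mem_tate_general C p abv θ hna hcomplete habsθ l hl d s u huG

end Carlitz
end

section
/- Let l ≥ 1 (q = p^l), let s = (s_1,…,s_d) be an index with d ≥ 1, and let u = (u_1,…,u_d) ∈ Kbar[t]^d satisfy ‖u_k‖∞ < |θ|∞^{s_k·q/(q−1)} for all k, so that the polylogarithm series below lie in the Tate algebra T. Then the following identity holds in L, the fraction field of T: L_{l,u,s}^(−l)(t) = u_d^(−l)·L_{l,(u_1,…,u_{d−1}),(s_1,…,s_{d−1})}(t) / (t − θ)^{s_1+⋯+s_{d−1}} + L_{l,u,s}(t) / (t − θ)^{s_1+⋯+s_d}, where for d = 1 the polylogarithm with empty data is interpreted as 1. -/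
/-!
Twisting by `-l` lowers every summation index by one, since
`(t - θ^{q^j})^{(-l)} = t - θ^{q^{j-1}}` and `(u^{(il)})^{(-l)} = u^{((i-1)l)}`. A term of
`L_{l,u,s}` with `i_d ≥ 1` therefore becomes `(t - θ)^{-(s_1+⋯+s_d)}` times the term at
`(i_1 - 1, …, i_d - 1)`, while a term with `i_d = 0` becomes
`u_d^{(-l)} (t - θ)^{-(s_1+⋯+s_{d-1})}` times the term of
`L_{l,(u_1,…,u_{d-1}),(s_1,…,s_{d-1})}` at `(i_1 - 1, …, i_{d-1} - 1)`. These two kinds of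
index tuples exhaust all of them, so summing in the Tate algebra and clearing denominators gives
the identity.
-/

namespace PowerSeries

theorem map_inv {k k' : Type*} [Field k] [Field k'] (φ : k →+* k') (B : PowerSeries k) :
    map φ B⁻¹ = (map φ B)⁻¹ := by
  by_cases hB : constantCoeff B = 0
  · have hφB : constantCoeff (map φ B) = 0 := by
      rw [← coeff_zero_eq_constantCoeff_apply, coeff_map, coeff_zero_eq_constantCoeff_apply, hB,
        map_zero]
    rw [inv_eq_zero.2 hB, inv_eq_zero.2 hφB, map_zero]
  · have hφB : constantCoeff (map φ B) ≠ 0 := by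
      rwa [← coeff_zero_eq_constantCoeff_apply, coeff_map, coeff_zero_eq_constantCoeff_apply,
        map_ne_zero]
    rw [eq_comm, inv_eq_iff_mul_eq_one hφB, ← map_mul, PowerSeries.inv_mul_cancel _ hB, map_one]

theorem mul_mul_inv_mul_cancel {k : Type*} [Field k] {c : PowerSeries k}
    (hc : constantCoeff c ≠ 0) (a b : PowerSeries k) : a * (c * b)⁻¹ * c = a * b⁻¹ := by
  rw [PowerSeries.mul_inv_rev, mul_assoc, mul_assoc, PowerSeries.inv_mul_cancel _ hc, mul_one]

theorem X_sub_C_ne_zero {R : Type*} [CommRing R] [Nontrivial R] (a : R) : X - C a ≠ 0 :=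
  fun h => by simpa using congrArg (coeff 1) h

end PowerSeries

namespace Carlitz

section TateSums

variable {C : Type} [Field C] {abv : AbsoluteValue C ℝ} {ι ι' : Type}
  {f : ι → PowerSeries C} {g : ι' → PowerSeries C} {S T : PowerSeries C}

theorem abv_coeff_coe_mul_le {R : Type*} [CommRing R] (abv : AbsoluteValue R ℝ)
    (Q : Polynomial R) (φ : PowerSeries R) {ε : ℝ} (hφ : ∀ n, abv (PowerSeries.coeff n φ) ≤ ε)
    (n : ℕ) :
    abv (PowerSeries.coeff n ((Q : PowerSeries R) * φ)) ≤
      (∑ a ∈ Q.support, abv (Q.coeff a)) * ε := by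
  conv_lhs => rw [Q.as_sum_support_C_mul_X_pow, ← Polynomial.coeToPowerSeries.ringHom_apply]
  simp only [map_sum, map_mul, map_pow, Polynomial.coeToPowerSeries.ringHom_apply,
    Polynomial.coe_C, Polynomial.coe_X]
  rw [Finset.sum_mul, map_sum, Finset.sum_mul]
  refine (abv.sum_le _ _).trans (Finset.sum_le_sum fun a _ => ?_)
  rw [mul_assoc, PowerSeries.coeff_C_mul, PowerSeries.coeff_X_pow_mul', abv.map_mul]
  split_ifs
  · exact mul_le_mul_of_nonneg_left (hφ _) (abv.nonneg _)
  · simpa using mul_nonneg (abv.nonneg (Q.coeff a)) ((abv.nonneg _).trans (hφ 0))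

namespace HasSumTate

theorem unique (hS : HasSumTate abv f S) (hT : HasSumTate abv f T) : S = T := by
  classical
  ext n
  by_contra hne
  have hpos : 0 < abv (PowerSeries.coeff n S - PowerSeries.coeff n T) :=
    abv.pos (sub_ne_zero.2 hne)
  obtain ⟨F, hF⟩ := hS _ (half_pos hpos)
  obtain ⟨F', hF'⟩ := hT _ (half_pos hpos)
  have h := hF (F ∪ F') Finset.subset_union_left n
  have h' := hF' (F ∪ F') Finset.subset_union_right n
  rw [map_sub] at h h'
  have := abv.sub_le (PowerSeries.coeff n S) (PowerSeries.coeff n (∑ i ∈ F ∪ F', f i))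
    (PowerSeries.coeff n T)
  rw [abv.map_sub (PowerSeries.coeff n S) (PowerSeries.coeff n (∑ i ∈ F ∪ F', f i))] at this
  linarith

theorem comp_equiv (e : ι' ≃ ι) (h : HasSumTate abv f S) : HasSumTate abv (f ∘ e) S := by
  intro ε hε
  obtain ⟨F, hF⟩ := h ε hε
  refine ⟨F.map e.symm.toEmbedding, fun G hG n => ?_⟩
  have hGF : F ⊆ G.map e.toEmbedding := fun x hx =>
    Finset.mem_map_equiv.2 (hG (Finset.mem_map_equiv.2 (by simpa using hx)))
  simpa [Finset.sum_map] using hF _ hGF n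

theorem sum_elim (hS : HasSumTate abv f S) (hT : HasSumTate abv g T) :
    HasSumTate abv (Sum.elim f g) (S + T) := by
  intro ε hε
  obtain ⟨F, hF⟩ := hS _ (half_pos hε)
  obtain ⟨F', hF'⟩ := hT _ (half_pos hε)
  refine ⟨F.disjSum F', fun G hG n => ?_⟩
  have hL : F ⊆ G.toLeft := fun x hx => Finset.mem_toLeft.2 (hG (Finset.inl_mem_disjSum.2 hx))
  have hR : F' ⊆ G.toRight := fun x hx =>
    Finset.mem_toRight.2 (hG (Finset.inr_mem_disjSum.2 hx))
  have hsplit : (∑ i ∈ G, Sum.elim f g i) - (S + T) =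
      ((∑ i ∈ G.toLeft, f i) - S) + ((∑ i ∈ G.toRight, g i) - T) := by
    rw [← G.toLeft_disjSum_toRight, Finset.sum_disjSum]
    simp only [Sum.elim_inl, Sum.elim_inr, Finset.toLeft_disjSum, Finset.toRight_disjSum]
    ring
  rw [hsplit, map_add]
  linarith [abv.add_le (PowerSeries.coeff n ((∑ i ∈ G.toLeft, f i) - S))
    (PowerSeries.coeff n ((∑ i ∈ G.toRight, g i) - T)), hF _ hL n, hF' _ hR n]

theorem polynomial_mul (h : HasSumTate abv f S) (Q : Polynomial C) :
    HasSumTate abv (fun i => (Q : PowerSeries C) * f i) (Q * S) := by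
  set M := ∑ a ∈ Q.support, abv (Q.coeff a)
  have hM : 0 ≤ M := Finset.sum_nonneg fun a _ => abv.nonneg _
  intro ε hε
  obtain ⟨F, hF⟩ := h (ε / (M + 1)) (by positivity)
  refine ⟨F, fun G hG n => ?_⟩
  rw [← Finset.mul_sum, ← mul_sub]
  calc _ ≤ M * (ε / (M + 1)) := abv_coeff_coe_mul_le abv Q _ (fun m => (hF G hG m).le) n
    _ < ε := by
      rw [mul_div_assoc', div_lt_iff₀ (by positivity)]
      nlinarith

end HasSumTate

end TateSums

section Twist

variable {C : Type} [Field C] {p : ℕ} [Fact p.Prime] [CharP C p] [PerfectRing C p]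

theorem twistHom_neg_natCast (n : ℕ) :
    twistHom p (-n) = ((iterateFrobeniusEquiv C p n).symm : C →+* C) := by
  rw [twistHom, zpow_neg, zpow_natCast, ← iterateFrobeniusEquiv_eq_pow]
  rfl

@[simp]
theorem twistHom_neg_pow (n : ℕ) (x : C) : twistHom p (-n) (x ^ p ^ n) = x := by
  rw [twistHom_neg_natCast]
  exact (iterateFrobeniusEquiv C p n).symm_apply_apply x

@[simp]
theorem twistHom_neg_apply_pow (n : ℕ) (x : C) : twistHom p (-n) x ^ p ^ n = x := by
  rw [twistHom_neg_natCast]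
  exact (iterateFrobeniusEquiv C p n).apply_symm_apply x

theorem HasSumTate.twistPS_neg {abv : AbsoluteValue C ℝ} {ι : Type} {f : ι → PowerSeries C}
    {S : PowerSeries C} (h : HasSumTate abv f S) (n : ℕ) :
    HasSumTate abv (fun i => twistPS p (-n) (f i)) (twistPS p (-n) S) := by
  intro ε hε
  obtain ⟨F, hF⟩ := h (ε ^ p ^ n) (by positivity)
  refine ⟨F, fun G hG m => ?_⟩
  rw [← map_sum, ← map_sub]
  -- `|x^{(-n)}| ^ p ^ n = |x|`, so the bound `ε ^ p ^ n` on coefficients becomes `ε`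
  have hroot := congrArg abv (twistHom_neg_apply_pow (p := p) n
    (PowerSeries.coeff m ((∑ i ∈ G, f i) - S)))
  rw [map_pow] at hroot
  exact (pow_lt_pow_iff_left₀ (abv.nonneg _) hε.le
    (pow_ne_zero n (Fact.out : p.Prime).ne_zero)).1 (hroot ▸ hF G hG m)

theorem twistPS_coe (n : ℤ) (Q : Polynomial C) :
    twistPS p n (Q : PowerSeries C) = (twistPoly p n Q : PowerSeries C) :=
  (Polynomial.polynomial_map_coe).symm

theorem twistPS_inv (n : ℤ) (B : PowerSeries C) : twistPS p n B⁻¹ = (twistPS p n B)⁻¹ :=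
  PowerSeries.map_inv _ B

theorem twistLS_coe (n : ℤ) (f : PowerSeries C) :
    twistLS p n (f : LaurentSeries C) = (twistPS p n f : LaurentSeries C) := by
  ext m
  rw [twistLS, HahnSeries.map_coeff, PowerSeries.coeff_coe, PowerSeries.coeff_coe]
  split_ifs
  · exact map_zero _
  · rfl

theorem twistPoly_neg_map_iterateFrobenius (l m : ℕ) (u : Polynomial C) :
    twistPoly p (-l) (u.map (iterateFrobenius C p ((m + 1) * l))) =
      u.map (iterateFrobenius C p (m * l)) := by
  rw [twistPoly, Polynomial.coe_mapRingHom, Polynomial.map_map]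
  congr 1
  ext x
  simp [iterateFrobenius_def, add_mul, pow_add, pow_mul]

theorem twistPS_X_sub_C_pow_succ (θ : C) (l j : ℕ) :
    twistPS p (-l) (PowerSeries.X - PowerSeries.C (θ ^ (p ^ l) ^ (j + 1))) =
      PowerSeries.X - PowerSeries.C (θ ^ (p ^ l) ^ j) := by
  rw [twistPS, map_sub, PowerSeries.map_X, PowerSeries.map_C, pow_succ, pow_mul,
    twistHom_neg_pow]

end Twist

section Denominators

variable {C : Type} [Field C]

noncomputable def polylogDenom (θ : C) (q m : ℕ) : PowerSeries C :=
  ∏ j ∈ Finset.Icc 1 m, (PowerSeries.X - PowerSeries.C (θ ^ q ^ j))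

@[simp]
theorem polylogDenom_zero (θ : C) (q : ℕ) : polylogDenom θ q 0 = 1 := rfl

theorem polylogDenom_succ (θ : C) (q m : ℕ) :
    polylogDenom θ q (m + 1) =
      polylogDenom θ q m * (PowerSeries.X - PowerSeries.C (θ ^ q ^ (m + 1))) :=
  Finset.prod_Icc_succ_top (by omega) _

theorem constantCoeff_polylogDenom_ne_zero {θ : C} (hθ : θ ≠ 0) (q m : ℕ) :
    PowerSeries.constantCoeff (polylogDenom θ q m) ≠ 0 := by
  simp [polylogDenom, Finset.prod_ne_zero_iff, hθ]

theorem twistPS_polylogDenom_succ {p : ℕ} [Fact p.Prime] [CharP C p] [PerfectRing C p]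
    (θ : C) (l m : ℕ) :
    twistPS p (-l) (polylogDenom θ (p ^ l) (m + 1)) =
      (PowerSeries.X - PowerSeries.C θ) * polylogDenom θ (p ^ l) m := by
  induction m with
  | zero => simpa [polylogDenom] using twistPS_X_sub_C_pow_succ (p := p) θ l 0
  | succ m ih =>
    rw [polylogDenom_succ θ _ (m + 1), map_mul, ih, twistPS_X_sub_C_pow_succ,
      polylogDenom_succ θ _ m, mul_assoc]

end Denominators

namespace DecTuples

theorem ext {d : ℕ} {i j : DecTuples d} (h : ∀ k, i.1 k = j.1 k) : i = j :=
  Subtype.ext (funext h)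

def succ {d : ℕ} (i : DecTuples d) : DecTuples d :=
  ⟨fun k => i.1 k + 1, fun _ _ hab => Nat.succ_lt_succ (i.2 hab)⟩

def snocZero {d : ℕ} (i : DecTuples d) : DecTuples (d + 1) :=
  ⟨Fin.snoc (fun k => i.1 k + 1) 0, fun a b hab => by
    induction b using Fin.lastCases with
    | last =>
      induction a using Fin.lastCases with
      | last => exact absurd hab (lt_irrefl _)
      | cast a => simp
    | cast b =>
      induction a using Fin.lastCases with
      | last => exact absurd hab (not_lt.2 (Fin.le_last _))
      | cast a => simpa using i.2 (Fin.castSucc_lt_castSucc_iff.1 hab)⟩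

theorem succ_apply {d : ℕ} (i : DecTuples d) (k : Fin d) : i.succ.1 k = i.1 k + 1 := rfl

theorem snocZero_castSucc {d : ℕ} (i : DecTuples d) (k : Fin d) :
    i.snocZero.1 k.castSucc = i.1 k + 1 := by
  simp [snocZero]

theorem snocZero_last {d : ℕ} (i : DecTuples d) : i.snocZero.1 (Fin.last d) = 0 := by
  simp [snocZero]

def pred {d : ℕ} (i : DecTuples d) (hi : ∀ k, i.1 k ≠ 0) : DecTuples d :=
  ⟨fun k => i.1 k - 1, fun a b hab => by
    have hlt := i.2 hab
    have hpos := hi b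
    dsimp only
    omega⟩

def initPred {d : ℕ} (i : DecTuples (d + 1)) : DecTuples d :=
  ⟨fun k => i.1 k.castSucc - 1, fun a b hab => by
    have hlt := i.2 (Fin.castSucc_lt_castSucc_iff.2 hab)
    have hpos := i.2 (Fin.castSucc_lt_last b)
    dsimp only
    omega⟩

theorem pred_apply {d : ℕ} (i : DecTuples d) (hi : ∀ k, i.1 k ≠ 0) (k : Fin d) :
    (i.pred hi).1 k = i.1 k - 1 := rfl

theorem initPred_apply {d : ℕ} (i : DecTuples (d + 1)) (k : Fin d) :
    i.initPred.1 k = i.1 k.castSucc - 1 := rfl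

theorem ne_zero_of_last_ne_zero {d : ℕ} (i : DecTuples (d + 1)) (h : i.1 (Fin.last d) ≠ 0)
    (k : Fin (d + 1)) : i.1 k ≠ 0 :=
  fun hk => h (Nat.eq_zero_of_le_zero (hk ▸ i.2.antitone (Fin.le_last k)))

def shiftEquiv (d : ℕ) : DecTuples (d + 1) ⊕ DecTuples d ≃ DecTuples (d + 1) where
  toFun := Sum.elim succ snocZero
  invFun i :=
    if h : i.1 (Fin.last d) = 0 then Sum.inr i.initPred
    else Sum.inl (i.pred (ne_zero_of_last_ne_zero i h))
  left_inv x := by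
    rcases x with j | j
    · beta_reduce
      rw [Sum.elim_inl, dif_neg (by rw [succ_apply]; omega)]
      exact congrArg Sum.inl (DecTuples.ext fun k => by
        rw [pred_apply, succ_apply, Nat.add_sub_cancel])
    · beta_reduce
      rw [Sum.elim_inr, dif_pos (snocZero_last j)]
      exact congrArg Sum.inr (DecTuples.ext fun k => by
        rw [initPred_apply, snocZero_castSucc, Nat.add_sub_cancel])
  right_inv i := by
    beta_reduce
    by_cases h : i.1 (Fin.last d) = 0
    · rw [dif_pos h, Sum.elim_inr]
      refine DecTuples.ext fun k => ?_
      induction k using Fin.lastCases with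
      | last => rw [snocZero_last, h]
      | cast k =>
        have hpos := i.2 (Fin.castSucc_lt_last k)
        rw [snocZero_castSucc, initPred_apply]
        omega
    · rw [dif_neg h, Sum.elim_inl]
      refine DecTuples.ext fun k => ?_
      have hpos := ne_zero_of_last_ne_zero i h k
      rw [succ_apply, pred_apply]
      omega

theorem shiftEquiv_inl {d : ℕ} (j : DecTuples (d + 1)) : shiftEquiv d (Sum.inl j) = j.succ :=
  rfl

theorem shiftEquiv_inr {d : ℕ} (j : DecTuples d) : shiftEquiv d (Sum.inr j) = j.snocZero := rfl

end DecTuples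

section Terms

variable {C : Type} [Field C] {p : ℕ} [Fact p.Prime] [CharP C p] {abv : AbsoluteValue C ℝ}
  {θ : C} {l d : ℕ}

theorem polylogTerm_eq (s : Fin d → ℕ+) (u : Fin d → Polynomial C) (i : DecTuples d) :
    polylogTerm p θ l s u i =
      (∏ k, ((u k).map (iterateFrobenius C p (i.1 k * l)) : PowerSeries C)) *
        (∏ k, polylogDenom θ (p ^ l) (i.1 k) ^ (s k : ℕ))⁻¹ := rfl

theorem constantCoeff_X_sub_C_pow_ne_zero (hθ : θ ≠ 0) (n : ℕ) :
    PowerSeries.constantCoeff ((PowerSeries.X - PowerSeries.C θ) ^ n) ≠ 0 := by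
  simp [hθ]

variable [PerfectRing C p]

theorem twistPS_prod_map_iterateFrobenius_succ (u : Fin d → Polynomial C) (i : Fin d → ℕ) :
    twistPS p (-l) (∏ k, ((u k).map (iterateFrobenius C p ((i k + 1) * l)) : PowerSeries C)) =
      ∏ k, ((u k).map (iterateFrobenius C p (i k * l)) : PowerSeries C) := by
  simp only [map_prod, twistPS_coe, twistPoly_neg_map_iterateFrobenius]

theorem twistPS_prod_polylogDenom_succ (s : Fin d → ℕ+) (i : Fin d → ℕ) :
    twistPS p (-l) (∏ k, polylogDenom θ (p ^ l) (i k + 1) ^ (s k : ℕ)) =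
      (PowerSeries.X - PowerSeries.C θ) ^ (∑ k, (s k : ℕ)) *
        ∏ k, polylogDenom θ (p ^ l) (i k) ^ (s k : ℕ) := by
  simp only [map_prod, map_pow, twistPS_polylogDenom_succ, mul_pow, Finset.prod_mul_distrib,
    Finset.prod_pow_eq_pow_sum]

theorem twistPS_polylogTerm_succ (hθ : θ ≠ 0) (s : Fin d → ℕ+) (u : Fin d → Polynomial C)
    (j : DecTuples d) :
    twistPS p (-l) (polylogTerm p θ l s u j.succ) *
        (PowerSeries.X - PowerSeries.C θ) ^ (∑ k, (s k : ℕ)) =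
      polylogTerm p θ l s u j := by
  simp only [polylogTerm_eq, DecTuples.succ_apply]
  rw [map_mul, twistPS_inv, twistPS_prod_map_iterateFrobenius_succ,
    twistPS_prod_polylogDenom_succ,
    PowerSeries.mul_mul_inv_mul_cancel (constantCoeff_X_sub_C_pow_ne_zero hθ _)]

theorem twistPS_polylogTerm_snocZero (hθ : θ ≠ 0) (s : Fin (d + 1) → ℕ+)
    (u : Fin (d + 1) → Polynomial C) (j : DecTuples d) :
    twistPS p (-l) (polylogTerm p θ l s u j.snocZero) *
        (PowerSeries.X - PowerSeries.C θ) ^ (∑ k : Fin d, (s k.castSucc : ℕ)) =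
      (twistPoly p (-l) (u (Fin.last d)) : PowerSeries C) *
        polylogTerm p θ l (Fin.init s) (Fin.init u) j := by
  simp only [polylogTerm_eq, Fin.init, Fin.prod_univ_castSucc, DecTuples.snocZero_castSucc,
    DecTuples.snocZero_last, zero_mul, iterateFrobenius_zero, Polynomial.map_id,
    polylogDenom_zero, one_pow, mul_one]
  rw [map_mul, map_mul, twistPS_inv, twistPS_prod_map_iterateFrobenius_succ,
    twistPS_prod_polylogDenom_succ, twistPS_coe,
    PowerSeries.mul_mul_inv_mul_cancel (constantCoeff_X_sub_C_pow_ne_zero hθ _),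
    mul_right_comm, mul_comm]

theorem IsPolylog.frobenius_equation (hθ : θ ≠ 0) {s : Fin (d + 1) → ℕ+}
    {u : Fin (d + 1) → Polynomial C} {L L' : PowerSeries C} (hL : IsPolylog p abv θ l s u L)
    (hL' : IsPolylog p abv θ l (Fin.init s) (Fin.init u) L') :
    (PowerSeries.X - PowerSeries.C θ) ^ (∑ k, (s k : ℕ)) * twistPS p (-l) L =
      L + (twistPoly p (-l) (u (Fin.last d)) : PowerSeries C) *
        (PowerSeries.X - PowerSeries.C θ) ^ (s (Fin.last d) : ℕ) * L' := by
  set c : Polynomial C := Polynomial.X - Polynomial.C θ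
  have hc : (c : PowerSeries C) = PowerSeries.X - PowerSeries.C θ := by simp [c]
  have htwisted := ((HasSumTate.twistPS_neg hL l).polynomial_mul
    (c ^ ∑ k, (s k : ℕ))).comp_equiv (DecTuples.shiftEquiv d)
  have hsplit := HasSumTate.sum_elim hL
    (HasSumTate.polynomial_mul hL'
      (twistPoly p (-l) (u (Fin.last d)) * c ^ (s (Fin.last d) : ℕ)))
  push_cast [hc] at htwisted hsplit
  refine htwisted.unique ?_
  convert hsplit using 1
  funext x
  rcases x with j | j
  · rw [Function.comp_apply, DecTuples.shiftEquiv_inl, Sum.elim_inl, mul_comm]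
    exact twistPS_polylogTerm_succ hθ s u j
  · rw [Function.comp_apply, DecTuples.shiftEquiv_inr, Sum.elim_inr, Fin.sum_univ_castSucc,
      pow_add]
    linear_combination (PowerSeries.X - PowerSeries.C θ) ^ (s (Fin.last d) : ℕ) *
      twistPS_polylogTerm_snocZero (l := l) hθ s u j

end Terms

theorem subTuple_zero_eq_init {α : Type} {d : ℕ} (v : Fin (d + 1) → α) :
    subTuple v 0 (d + 1 - 1) (Nat.sub_le _ _) = Fin.init v := by
  funext k
  simp only [subTuple, Fin.init, zero_add]
  rfl

/-- The Frobenius difference equation of Carlitz multiple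
polylogarithms, an identity in the fraction field of the Tate algebra (realized
inside the field of formal Laurent series):
`L_{l,u,s}^{(-l)} = u_d^{(-l)}·L_{l,(u_1,…,u_{d-1}),(s_1,…,s_{d-1})}/(t-θ)^{s_1+⋯+s_{d-1}} + L_{l,u,s}/(t-θ)^{s_1+⋯+s_d}`
(the polylogarithm with empty data being `1` for `d = 1`). -/
theorem polylog_frobenius_equation
    (C : Type) [Field C] (p : ℕ) [Fact p.Prime] [CharP C p] [PerfectRing C p]
    (abv : AbsoluteValue C ℝ) (θ : C)
    (habsθ : abv θ = p)
    (l : ℕ) (d : ℕ) (hd : 0 < d) (s : Fin d → ℕ+) (u : Fin d → Polynomial C)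
    (Ld : PowerSeries C) (hLd : IsPolylog p abv θ l s u Ld)
    (Ld' : PowerSeries C)
    (hLd' : IsPolylog p abv θ l (subTuple s 0 (d - 1) (by omega))
      (subTuple u 0 (d - 1) (by omega)) Ld') :
    twistLS p (-(l : ℤ)) (Ld : LaurentSeries C) =
      ((twistPoly p (-(l : ℤ)) (u ⟨d - 1, by omega⟩) : PowerSeries C) : LaurentSeries C) *
          (Ld' : LaurentSeries C) /
          (((PowerSeries.X - PowerSeries.C θ : PowerSeries C) : LaurentSeries C)
            ^ (∑ k : Fin d, if (k : ℕ) + 1 < d then (s k : ℕ) else 0)) +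
        (Ld : LaurentSeries C) /
          (((PowerSeries.X - PowerSeries.C θ : PowerSeries C) : LaurentSeries C)
            ^ (∑ k : Fin d, (s k : ℕ))) := by
  obtain ⟨d, rfl⟩ : ∃ d', d = d' + 1 := ⟨d - 1, by omega⟩
  have hθ : θ ≠ 0 := by
    rintro rfl
    have hp0 : (p : ℝ) = 0 := by rw [← habsθ, map_zero]
    exact (Fact.out : p.Prime).ne_zero (by exact_mod_cast hp0)
  rw [subTuple_zero_eq_init, subTuple_zero_eq_init] at hLd'
  have key := congrArg (HahnSeries.ofPowerSeries ℤ C) (hLd.frobenius_equation hθ hLd')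
  simp only [map_mul, map_add, map_pow] at key
  have hsum : (∑ k : Fin (d + 1), if (k : ℕ) + 1 < d + 1 then (s k : ℕ) else 0) =
      ∑ k : Fin d, (s k.castSucc : ℕ) := by
    simp [Fin.sum_univ_castSucc]
  rw [twistLS_coe, hsum, show (⟨d + 1 - 1, by omega⟩ : Fin (d + 1)) = Fin.last d from rfl,
    Fin.sum_univ_castSucc, pow_add]
  rw [Fin.sum_univ_castSucc, pow_add] at key
  have hc : ((PowerSeries.X - PowerSeries.C θ : PowerSeries C) : LaurentSeries C) ≠ 0 :=
    (map_ne_zero_iff _ HahnSeries.ofPowerSeries_injective).2 (PowerSeries.X_sub_C_ne_zero θ)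
  field_simp
  linear_combination key

end Carlitz
end

section
/- Let l ≥ 1 (q = p^l). The (−l)-fold twist f ↦ f^(−l) is a ring automorphism of the Tate algebra T and extends uniquely to its fraction field L. If f ∈ L satisfies f^(−l) = f, then f ∈ F_q(t), the field of rational functions in t with coefficients in the finite field F_q ⊆ C∞. -/
/-!
The twist `x ↦ x^{p^n}` raises absolute values to the power `p^n`, so it preserves the Tate
algebra, and `τ_l` inverts `τ_{-l}`. For the fixed field write `b = t^m b₁` with `b₁(0) ≠ 0`;
then `F = a / b₁` is a power series fixed by the twist, so its coefficients lie in the finite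
field `𝔽_q`, on which `|·|` is trivial. Choose `D` with `|b₁ᵢ| < |b₁(0)|` for `i > D`. Since the
coefficients of `F b₁ = a` tend to `0`, the ultrametric inequality shows that for large `n` two
positions with the same `D` preceding coefficients of `F` satisfy
`|b₁(0)| · |Fₙ - Fₙ'| < |b₁(0)|`, so `Fₙ = Fₙ'`. By pigeonhole `(Fₙ)` is eventually periodic,
that is `F (t^T - 1)` is a polynomial over `𝔽_q`.
-/

namespace Carlitz

open Filter PowerSeries

section Valuation

variable {C : Type} [Field C] {abv : AbsoluteValue C ℝ}

lemma abv_sum_lt (hna : IsNonarch abv) {ι : Type*} {s : Finset ι} {x : ι → C} {K : ℝ}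
    (hK : 0 < K) (h : ∀ i ∈ s, abv (x i) < K) : abv (∑ i ∈ s, x i) < K := by
  rcases s.eq_empty_or_nonempty with rfl | hs
  · simpa using hK
  · obtain ⟨i, hi, hle⟩ := IsNonarchimedean.finset_image_add_of_nonempty hna x hs
    exact hle.trans_lt (h i hi)

lemma abv_sub_le_max (hna : IsNonarch abv) (x y : C) : abv (x - y) ≤ max (abv x) (abv y) := by
  simpa [sub_eq_add_neg] using hna x (-y)

lemma abv_eq_one_of_mem_finite {K : Subfield C} [Finite K] {x : C} (hx : x ∈ K) (hx0 : x ≠ 0) :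
    abv x = 1 := by
  have hy0 : (⟨x, hx⟩ : K) ≠ 0 := fun h => hx0 (congrArg Subtype.val h)
  obtain ⟨n, hn, hpow⟩ := (isOfFinOrder_of_finite (Units.mk0 _ hy0)).exists_pow_eq_one
  have hxn : x ^ n = 1 := by
    simpa using congrArg (fun u : Kˣ => ((u : K) : C)) hpow
  rw [← pow_eq_one_iff_of_nonneg (abv.nonneg x) hn.ne', ← map_pow, hxn, map_one]

lemma abv_le_one_of_mem_finite {K : Subfield C} [Finite K] {x : C} (hx : x ∈ K) :
    abv x ≤ 1 := by
  rcases eq_or_ne x 0 with rfl | hx0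
  · simp
  · exact (abv_eq_one_of_mem_finite hx hx0).le

lemma inTate_divXPowOrder {b : C⟦X⟧} (hb : InTate abv b) : InTate abv (divXPowOrder b) := by
  simp only [InTate, coeff_divXPowOrder]
  exact hb.comp (tendsto_add_atTop_nat _)

end Valuation

section Twist

variable {C : Type} [Field C] (p : ℕ) [Fact p.Prime] [CharP C p] [PerfectRing C p]

lemma twistHom_twistHom (a b : ℤ) (x : C) :
    twistHom p a (twistHom p b x) = twistHom p (a + b) x := by
  simp only [twistHom, zpow_add]
  rfl

lemma twistHom_natCast (n : ℕ) (x : C) : twistHom p n x = x ^ p ^ n := by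
  induction n generalizing x with
  | zero => simp [twistHom]
  | succ n ih =>
    rw [Nat.cast_succ, ← twistHom_twistHom, ih]
    simp [twistHom, frobenius_def, ← pow_mul, pow_succ, mul_comm]

lemma abv_twistHom (abv : AbsoluteValue C ℝ) (n : ℤ) (x : C) :
    abv (twistHom p n x) = abv x ^ ((p : ℝ) ^ n) := by
  obtain ⟨k, rfl | rfl⟩ := Int.eq_nat_or_neg n
  · rw [twistHom_natCast, map_pow, zpow_natCast, ← Nat.cast_pow, Real.rpow_natCast]
  · set y := twistHom p (-(k : ℤ)) x
    have hx : x = y ^ p ^ k := by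
      rw [← twistHom_natCast, twistHom_twistHom, add_neg_cancel]
      simp [twistHom]
    rw [hx, map_pow, zpow_neg, zpow_natCast, ← Nat.cast_pow,
      Real.pow_rpow_inv_natCast (abv.nonneg y) (pow_ne_zero _ (Fact.out : p.Prime).ne_zero)]

lemma inTate_twistPS (abv : AbsoluteValue C ℝ) (n : ℤ) {f : C⟦X⟧} (hf : InTate abv f) :
    InTate abv (twistPS p n f) := by
  have hexp : 0 < (p : ℝ) ^ n := zpow_pos (Nat.cast_pos.2 (Fact.out : p.Prime).pos) n
  have := hf.rpow_const (Or.inr hexp.le)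
  rw [Real.zero_rpow hexp.ne'] at this
  simpa [InTate, twistPS, abv_twistHom] using this

lemma twistPS_injective (n : ℤ) : Function.Injective (twistPS (C := C) p n) :=
  PowerSeries.map_injective _ (RingEquiv.injective _)

lemma twistPS_twistPS (a b : ℤ) (f : C⟦X⟧) :
    twistPS p a (twistPS p b f) = twistPS p (a + b) f := by
  ext n
  simp [twistPS, twistHom_twistHom]

lemma twistPS_zero (f : C⟦X⟧) : twistPS p 0 f = f := by
  ext n
  simp [twistPS, twistHom]

lemma mem_Fq_of_twistHom_eq_self {l : ℕ} {x : C} (h : twistHom p (-(l : ℤ)) x = x) :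
    x ∈ Fq C p l := by
  change x ^ p ^ l = x
  rw [← twistHom_natCast, ← h, twistHom_twistHom, h, add_neg_cancel]
  simp [twistHom]

end Twist

section FixedQuotient

variable {k : Type*} [Field k] {φ : k →+* k} {a b : k⟦X⟧}

lemma map_mul_divXPowOrder_eq (h : map φ a * b = a * map φ b) :
    map φ a * divXPowOrder b = a * map φ (divXPowOrder b) := by
  have hb : X ^ b.order.toNat * divXPowOrder b = b := X_pow_order_mul_divXPowOrder
  apply mul_left_cancel₀ (pow_ne_zero b.order.toNat (X_ne_zero (R := k)))
  calc X ^ b.order.toNat * (map φ a * divXPowOrder b) = map φ a * b := by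
        conv_rhs => rw [← hb]
        ring
    _ = a * map φ b := h
    _ = X ^ b.order.toNat * (a * map φ (divXPowOrder b)) := by
      conv_lhs => rw [← hb, map_mul, map_pow, map_X]
      ring

lemma map_mul_inv_eq_self (h : map φ a * b = a * map φ b) (hb : constantCoeff b ≠ 0) :
    map φ (a * b⁻¹) = a * b⁻¹ := by
  have hφb : map φ b ≠ 0 := fun h0 => hb <| by
    simpa [coeff_zero_eq_constantCoeff_apply] using congrArg (coeff 0) h0
  have hb0 : b ≠ 0 := fun h0 => hb (by simp [h0])
  have ha : a * b⁻¹ * b = a := by rw [mul_assoc, PowerSeries.inv_mul_cancel b hb, mul_one]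
  apply mul_right_cancel₀ (mul_ne_zero hφb hb0)
  calc map φ (a * b⁻¹) * (map φ b * b) = map φ (a * b⁻¹ * b) * b := by
        rw [map_mul (PowerSeries.map φ) (a * b⁻¹) b]; ring
    _ = a * b⁻¹ * b * map φ b := by rw [ha, h]
    _ = a * b⁻¹ * (map φ b * b) := by ring

end FixedQuotient

lemma exists_eventually_periodic_of_window {α : Type*} [Finite α] (f : ℕ → α) {N w : ℕ}
    (hf : ∀ m m', N ≤ m → N ≤ m' → (∀ i < w, f (m + i) = f (m' + i)) →
      f (m + w) = f (m' + w)) :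
    ∃ N' T, 0 < T ∧ ∀ n, N' ≤ n → f (n + T) = f n := by
  obtain ⟨k, k', hne, heq⟩ :=
    Finite.exists_ne_map_eq_of_infinite fun k (i : Fin w) => f (N + k + i)
  wlog hlt : k < k' generalizing k k'
  · exact this k' k hne.symm heq.symm (hne.lt_or_gt.resolve_left hlt)
  have hshift : ∀ j, f (N + k + j) = f (N + k' + j) := by
    intro j
    induction j using Nat.strong_induction_on with
    | _ j ih =>
      by_cases hj : j < w
      · exact congrFun heq ⟨j, hj⟩
      · have hstep := hf (N + k + (j - w)) (N + k' + (j - w)) (by omega) (by omega)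
          fun i hi => by simpa [add_assoc] using ih (j - w + i) (by omega)
        rwa [add_assoc _ (j - w), add_assoc _ (j - w), Nat.sub_add_cancel (by omega)] at hstep
  refine ⟨N + k, k' - k, by omega, fun n hn => ?_⟩
  have := hshift (n - (N + k))
  rw [show N + k + (n - (N + k)) = n by omega,
    show N + k' + (n - (N + k)) = n + (k' - k) by omega] at this
  exact this.symm

section Periodicity

variable {C : Type} [Field C] {K : Subfield C}

lemma coeffsIn_X_pow_mul {h : Polynomial C} (hh : CoeffsIn K h) (m : ℕ) :
    CoeffsIn K (Polynomial.X ^ m * h) := fun i => by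
  rw [Polynomial.coeff_X_pow_mul']
  split_ifs
  exacts [hh _, zero_mem K]

theorem exists_coeffsIn_mul_eq_of_periodic {F : C⟦X⟧} (hF : ∀ n, coeff n F ∈ K) {N T : ℕ}
    (hT : 0 < T) (hper : ∀ n, N ≤ n → coeff (n + T) F = coeff n F) :
    ∃ g h : Polynomial C, CoeffsIn K g ∧ CoeffsIn K h ∧ h ≠ 0 ∧ F * h = g := by
  have hcoeff : ∀ j, coeff j (F * ((Polynomial.X ^ T - 1 : Polynomial C) : C⟦X⟧)) =
      (if T ≤ j then coeff (j - T) F else 0) - coeff j F := by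
    intro j
    simp [mul_sub, coeff_mul_X_pow']
  refine ⟨trunc (N + T) (F * ((Polynomial.X ^ T - 1 : Polynomial C) : C⟦X⟧)),
    Polynomial.X ^ T - 1, fun i => ?_, fun i => ?_, ?_, ?_⟩
  · rw [coeff_trunc, hcoeff]
    split_ifs <;> simp [sub_mem, hF, zero_mem]
  · rw [Polynomial.coeff_sub, Polynomial.coeff_X_pow, Polynomial.coeff_one]
    split_ifs <;> simp [one_mem, zero_mem]
  · simpa using Polynomial.X_pow_sub_C_ne_zero hT (1 : C)
  · ext j
    rw [Polynomial.coeff_coe, coeff_trunc]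
    split_ifs with hj
    · rfl
    · rw [hcoeff, if_pos (by omega), ← hper (j - T) (by omega), Nat.sub_add_cancel (by omega),
        sub_self]

variable {abv : AbsoluteValue C ℝ} [Finite K] {F b : C⟦X⟧} {D N : ℕ}

lemma abv_truncated_coeff_mul_lt (hna : IsNonarch abv) (hF : ∀ n, coeff n F ∈ K)
    (hD : ∀ i, D < i → abv (coeff i b) < abv (coeff 0 b))
    (hN : ∀ n, N ≤ n → abv (coeff n (F * b)) < abv (coeff 0 b)) {n : ℕ} (hNn : N ≤ n)
    (hDn : D ≤ n) :
    abv (∑ i ∈ Finset.range (D + 1), coeff i b * coeff (n - i) F) < abv (coeff 0 b) := by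
  have hb0 : 0 < abv (coeff 0 b) := (abv.nonneg _).trans_lt (hN N le_rfl)
  have hsplit : coeff n (F * b) =
      ∑ i ∈ Finset.range (D + 1), coeff i b * coeff (n - i) F +
        ∑ i ∈ Finset.Ico (D + 1) (n + 1), coeff i b * coeff (n - i) F := by
    rw [mul_comm, coeff_mul,
      Finset.Nat.sum_antidiagonal_eq_sum_range_succ (fun i j => coeff i b * coeff j F),
      Finset.sum_range_add_sum_Ico _ (by omega)]
  have htail : abv (∑ i ∈ Finset.Ico (D + 1) (n + 1), coeff i b * coeff (n - i) F) <
      abv (coeff 0 b) := abv_sum_lt hna hb0 fun i hi => by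
    rw [map_mul]
    calc abv (coeff i b) * abv (coeff (n - i) F) ≤ abv (coeff i b) * 1 :=
          mul_le_mul_of_nonneg_left (abv_le_one_of_mem_finite (hF _)) (abv.nonneg _)
      _ < abv (coeff 0 b) := by
        rw [mul_one]
        exact hD i (by simp only [Finset.mem_Ico] at hi; omega)
  rw [eq_sub_of_add_eq hsplit.symm]
  exact (abv_sub_le_max hna _ _).trans_lt (max_lt (hN n hNn) htail)

lemma coeff_add_eq_of_window_eq (hna : IsNonarch abv) (hF : ∀ n, coeff n F ∈ K)
    (hD : ∀ i, D < i → abv (coeff i b) < abv (coeff 0 b))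
    (hN : ∀ n, N ≤ n → abv (coeff n (F * b)) < abv (coeff 0 b)) {m m' : ℕ} (hm : N ≤ m)
    (hm' : N ≤ m') (hw : ∀ i < D, coeff (m + i) F = coeff (m' + i) F) :
    coeff (m + D) F = coeff (m' + D) F := by
  set c := fun n => ∑ i ∈ Finset.range (D + 1), coeff i b * coeff (n - i) F
  have hc : c (m + D) - c (m' + D) = coeff 0 b * (coeff (m + D) F - coeff (m' + D) F) := by
    have hwindow : ∑ i ∈ Finset.range D, coeff (i + 1) b * coeff (m + D - (i + 1)) F =
        ∑ i ∈ Finset.range D, coeff (i + 1) b * coeff (m' + D - (i + 1)) F :=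
      Finset.sum_congr rfl fun i hi => by
        rw [Finset.mem_range] at hi
        rw [show m + D - (i + 1) = m + (D - 1 - i) by omega,
          show m' + D - (i + 1) = m' + (D - 1 - i) by omega, hw _ (by omega)]
    simp only [c, Finset.sum_range_succ', hwindow, Nat.sub_zero]
    ring
  have hlt : abv (coeff 0 b) * abv (coeff (m + D) F - coeff (m' + D) F) <
      abv (coeff 0 b) * 1 := by
    rw [mul_one, ← map_mul, ← hc]
    exact (abv_sub_le_max hna _ _).trans_lt (max_lt
      (abv_truncated_coeff_mul_lt hna hF hD hN (by omega) (by omega))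
      (abv_truncated_coeff_mul_lt hna hF hD hN (by omega) (by omega)))
  by_contra hne
  rw [abv_eq_one_of_mem_finite (sub_mem (hF _) (hF _)) (sub_ne_zero.2 hne)] at hlt
  exact lt_irrefl _ hlt

theorem exists_eventually_periodic_coeff_of_inTate_mul (hna : IsNonarch abv)
    (hF : ∀ n, coeff n F ∈ K) (hb : InTate abv b) (hb0 : constantCoeff b ≠ 0)
    (hFb : InTate abv (F * b)) :
    ∃ N T, 0 < T ∧ ∀ n, N ≤ n → coeff (n + T) F = coeff n F := by
  have hpos : 0 < abv (coeff 0 b) := abv.pos (by rwa [coeff_zero_eq_constantCoeff_apply])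
  obtain ⟨D, hD⟩ := eventually_atTop.1 (hb.eventually (gt_mem_nhds hpos))
  obtain ⟨N, hN⟩ := eventually_atTop.1 (hFb.eventually (gt_mem_nhds hpos))
  obtain ⟨N', T, hT, hper⟩ := exists_eventually_periodic_of_window
    (fun n => (⟨coeff n F, hF n⟩ : K)) (N := N) (w := D) fun m m' hm hm' hw =>
      Subtype.ext (coeff_add_eq_of_window_eq hna hF (fun i hi => hD i hi.le) hN hm hm'
        fun i hi => congrArg Subtype.val (hw i hi))
  exact ⟨N', T, hT, fun n hn => congrArg Subtype.val (hper n hn)⟩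

end Periodicity

theorem twist_automorphism_fixed_field_general
    (C : Type) [Field C] (p : ℕ) [Fact p.Prime] [CharP C p] [PerfectRing C p]
    (abv : AbsoluteValue C ℝ) (hna : IsNonarch abv) (l : ℕ) (hl : 0 < l) :
    (∀ f : PowerSeries C, InTate abv f → InTate abv (twistPS p (-(l : ℤ)) f)) ∧
    Function.Injective (twistPS p (-(l : ℤ)) : PowerSeries C → PowerSeries C) ∧
    (∀ g : PowerSeries C, InTate abv g →
      ∃ f : PowerSeries C, InTate abv f ∧ twistPS p (-(l : ℤ)) f = g) ∧
    (∀ a b : PowerSeries C, InTate abv a → InTate abv b → b ≠ 0 →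
      twistPS p (-(l : ℤ)) a * b = a * twistPS p (-(l : ℤ)) b →
      ∃ g h : Polynomial C, CoeffsIn (Fq C p l) g ∧ CoeffsIn (Fq C p l) h ∧ h ≠ 0 ∧
        a * (h : PowerSeries C) = b * (g : PowerSeries C)) := by
  refine ⟨fun f => inTate_twistPS p abv _, twistPS_injective p _, fun g hg =>
    ⟨twistPS p l g, inTate_twistPS p abv _ hg, by rw [twistPS_twistPS, neg_add_cancel,
      twistPS_zero]⟩, fun a b ha hb hb0 hab => ?_⟩
  have := fqFintype C p l hl
  set b₁ := divXPowOrder b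
  have hb₁ : constantCoeff b₁ ≠ 0 := constantCoeff_divXPowOrder_eq_zero_iff.not.2 hb0
  set F := a * b₁⁻¹
  have hFb : F * b₁ = a := by rw [mul_assoc, PowerSeries.inv_mul_cancel b₁ hb₁, mul_one]
  have hτF : twistPS p (-(l : ℤ)) F = F :=
    map_mul_inv_eq_self (map_mul_divXPowOrder_eq hab) hb₁
  have hF : ∀ n, coeff n F ∈ Fq C p l := fun n => mem_Fq_of_twistHom_eq_self p <| by
    rw [← coeff_map, ← twistPS, hτF]
  obtain ⟨N, T, hT, hper⟩ := exists_eventually_periodic_coeff_of_inTate_mul hna hF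
    (inTate_divXPowOrder hb) hb₁ (hFb ▸ ha)
  obtain ⟨g, h, hg, hh, hh0, hFh⟩ := exists_coeffsIn_mul_eq_of_periodic hF hT hper
  refine ⟨g, Polynomial.X ^ b.order.toNat * h, hg, coeffsIn_X_pow_mul hh _,
    mul_ne_zero (pow_ne_zero _ Polynomial.X_ne_zero) hh0, ?_⟩
  calc a * ((Polynomial.X ^ b.order.toNat * h : Polynomial C) : C⟦X⟧)
      = X ^ b.order.toNat * b₁ * (F * (h : C⟦X⟧)) := by
        rw [← hFb]
        push_cast
        ring
    _ = b * (g : C⟦X⟧) := by rw [X_pow_order_mul_divXPowOrder, hFh]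

/-- The `(-l)`-fold twist is a ring automorphism of the Tate
algebra `𝕋` (it is injective and maps `𝕋` onto `𝕋`), and its unique extension to the
fraction field `L` has fixed field `𝔽_q(t)`: if `f = a/b ∈ L` (`a, b ∈ 𝕋`, `b ≠ 0`)
satisfies `f^{(-l)} = f`, then `f = g/h` is a rational function in `t` with
coefficients in the finite field `𝔽_q ⊆ C_∞`. -/
theorem twist_automorphism_fixed_field
    (C : Type) [Field C] (p : ℕ) [Fact p.Prime] [CharP C p] [PerfectRing C p]
    [IsAlgClosed C] (abv : AbsoluteValue C ℝ) (θ : C)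
    (hna : IsNonarch abv) (hcomplete : AbvComplete abv) (habsθ : abv θ = p)
    (l : ℕ) (hl : 0 < l) :
    (∀ f : PowerSeries C, InTate abv f → InTate abv (twistPS p (-(l : ℤ)) f)) ∧
    Function.Injective (twistPS p (-(l : ℤ)) : PowerSeries C → PowerSeries C) ∧
    (∀ g : PowerSeries C, InTate abv g →
      ∃ f : PowerSeries C, InTate abv f ∧ twistPS p (-(l : ℤ)) f = g) ∧
    (∀ a b : PowerSeries C, InTate abv a → InTate abv b → b ≠ 0 →
      twistPS p (-(l : ℤ)) a * b = a * twistPS p (-(l : ℤ)) b →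
      ∃ g h : Polynomial C, CoeffsIn (Fq C p l) g ∧ CoeffsIn (Fq C p l) h ∧ h ≠ 0 ∧
        a * (h : PowerSeries C) = b * (g : PowerSeries C)) :=
  twist_automorphism_fixed_field_general C p abv hna l hl

end Carlitz
end

section
/- Let F be an infinite field of characteristic p > 0, let w_1, w_2 ≥ 1 be integers, and let P_1(X) = Σ_{i=0}^{m} b_i X^{p^i} and P_2(Y) = Σ_{i=0}^{n} c_i Y^{p^i} be additive polynomials with coefficients b_i, c_i ∈ F. Set W = {(x,y) ∈ F² : P_1(x) + P_2(y) = 0}. Assume: (i) the projection of W to each of the two coordinates is surjective onto F; and (ii) W is stable under the action (x,y) ↦ (α^{w_1}·x, β^{w_2}·y) for all α, β ∈ F^×. Then all coefficients b_0,…,b_m and c_0,…,c_n are zero; equivalently, W = F². -/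
/-!
Put `x = 1` and scale only the first coordinate: for `α ≠ 0` the points `(1, y)` and
`(α^{w₁}, y)` both lie on `W`, so `P₁(α^{w₁}) = P₁(1)`. Hence the polynomial
`∑ bᵢ X^{w₁ pⁱ}` takes a constant value on the infinite set `F^×` and is therefore constant;
since its exponents `w₁ pⁱ` are positive and pairwise distinct, every `bᵢ` vanishes.
The same argument with the roles of the coordinates exchanged kills the `cᵢ`.
-/

namespace Carlitz

open Polynomial Finset

theorem eq_zero_of_forall_sum_mul_pow_eq {F ι : Type*} [Field F] [Infinite F]
    (s : Finset ι) (a : ι → F) (e : ι → ℕ) (he : Set.InjOn e s) (he₀ : ∀ i ∈ s, e i ≠ 0)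
    (k : F) (h : ∀ α : F, α ≠ 0 → ∑ i ∈ s, a i * α ^ e i = k) :
    ∀ i ∈ s, a i = 0 := by
  set q : F[X] := ∑ i ∈ s, C (a i) * X ^ e i
  have hq : q = C k := by
    refine eq_of_infinite_eval_eq q (C k) ((Set.finite_singleton 0).infinite_compl.mono ?_)
    intro α hα
    simpa [q, eval_finsetSum] using h α hα
  intro j hj
  have hcoeff := congrArg (coeff · (e j)) hq
  simp only [q, finsetSum_coeff, coeff_C_mul_X_pow, coeff_C, if_neg (he₀ j hj)] at hcoeff
  rwa [sum_eq_single_of_mem j hj fun i hi hij => if_neg fun hji => hij (he hi hj hji.symm),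
    if_pos rfl] at hcoeff

theorem eq_zero_of_forall_sum_mul_pow_pow_eq {F : Type*} [Field F] [Infinite F]
    {p w : ℕ} (hp : p.Prime) (hw : 1 ≤ w) (s : Finset ℕ) (b : ℕ → F)
    (k : F) (h : ∀ α : F, α ≠ 0 → ∑ i ∈ s, b i * (α ^ w) ^ p ^ i = k) :
    ∀ i ∈ s, b i = 0 := by
  refine eq_zero_of_forall_sum_mul_pow_eq s b (fun i => w * p ^ i) ?_ ?_ k fun α hα => ?_
  · intro i _ j _ hij
    exact Nat.pow_right_injective hp.two_le (Nat.eq_of_mul_eq_mul_left hw hij)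
  · intro i _
    exact (Nat.mul_pos hw (pow_pos hp.pos i)).ne'
  · simpa only [pow_mul] using h α hα

theorem additive_polynomial_relation_trivial_general
    (F : Type) [Field F] (p : ℕ) (hp : p.Prime) [Infinite F]
    (w₁ w₂ : ℕ) (hw₁ : 1 ≤ w₁) (hw₂ : 1 ≤ w₂)
    (m n : ℕ) (b : ℕ → F) (c : ℕ → F)
    (hproj₁ : ∀ x : F, ∃ y : F,
      (∑ i ∈ Finset.range (m + 1), b i * x ^ p ^ i) +
        (∑ i ∈ Finset.range (n + 1), c i * y ^ p ^ i) = 0)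
    (hproj₂ : ∀ y : F, ∃ x : F,
      (∑ i ∈ Finset.range (m + 1), b i * x ^ p ^ i) +
        (∑ i ∈ Finset.range (n + 1), c i * y ^ p ^ i) = 0)
    (hstab : ∀ α β : F, α ≠ 0 → β ≠ 0 → ∀ x y : F,
      (∑ i ∈ Finset.range (m + 1), b i * x ^ p ^ i) +
        (∑ i ∈ Finset.range (n + 1), c i * y ^ p ^ i) = 0 →
      (∑ i ∈ Finset.range (m + 1), b i * (α ^ w₁ * x) ^ p ^ i) +
        (∑ i ∈ Finset.range (n + 1), c i * (β ^ w₂ * y) ^ p ^ i) = 0) :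
    ((∀ i ∈ Finset.range (m + 1), b i = 0) ∧ (∀ i ∈ Finset.range (n + 1), c i = 0)) ∧
      ∀ x y : F,
        (∑ i ∈ Finset.range (m + 1), b i * x ^ p ^ i) +
          (∑ i ∈ Finset.range (n + 1), c i * y ^ p ^ i) = 0 := by
  have hb : ∀ i ∈ range (m + 1), b i = 0 := by
    obtain ⟨y, hy⟩ := hproj₁ 1
    refine eq_zero_of_forall_sum_mul_pow_pow_eq hp hw₁ _ b
      (∑ i ∈ range (m + 1), b i * 1 ^ p ^ i) fun α hα => ?_
    have hαy := hstab α 1 hα one_ne_zero 1 y hy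
    rw [mul_one, one_pow, one_mul] at hαy
    exact add_right_cancel (hαy.trans hy.symm)
  have hc : ∀ i ∈ range (n + 1), c i = 0 := by
    obtain ⟨x, hx⟩ := hproj₂ 1
    refine eq_zero_of_forall_sum_mul_pow_pow_eq hp hw₂ _ c
      (∑ i ∈ range (n + 1), c i * 1 ^ p ^ i) fun β hβ => ?_
    have hxβ := hstab 1 β one_ne_zero hβ x 1 hx
    rw [mul_one, one_pow, one_mul] at hxβ
    exact add_left_cancel (hxβ.trans hx.symm)
  refine ⟨⟨hb, hc⟩, fun x y => ?_⟩
  rw [sum_eq_zero fun i hi => by rw [hb i hi, zero_mul],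
    sum_eq_zero fun i hi => by rw [hc i hi, zero_mul], add_zero]

/-- Let `F` be an infinite field of characteristic `p > 0` and let
`P_1(X) = ∑ b_i X^{p^i}`, `P_2(Y) = ∑ c_i Y^{p^i}` be additive polynomials over `F`.
If `W = {(x,y) | P_1(x) + P_2(y) = 0}` surjects onto each coordinate and is stable
under `(x,y) ↦ (α^{w_1} x, β^{w_2} y)` for all `α, β ∈ F^×` (`w_1, w_2 ≥ 1`), then all
coefficients `b_i, c_i` vanish; equivalently, `W = F²`. -/
theorem additive_polynomial_relation_trivial
    (F : Type) [Field F] (p : ℕ) (hp : p.Prime) [CharP F p] [Infinite F]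
    (w₁ w₂ : ℕ) (hw₁ : 1 ≤ w₁) (hw₂ : 1 ≤ w₂)
    (m n : ℕ) (b : ℕ → F) (c : ℕ → F)
    (hproj₁ : ∀ x : F, ∃ y : F,
      (∑ i ∈ Finset.range (m + 1), b i * x ^ p ^ i) +
        (∑ i ∈ Finset.range (n + 1), c i * y ^ p ^ i) = 0)
    (hproj₂ : ∀ y : F, ∃ x : F,
      (∑ i ∈ Finset.range (m + 1), b i * x ^ p ^ i) +
        (∑ i ∈ Finset.range (n + 1), c i * y ^ p ^ i) = 0)
    (hstab : ∀ α β : F, α ≠ 0 → β ≠ 0 → ∀ x y : F,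
      (∑ i ∈ Finset.range (m + 1), b i * x ^ p ^ i) +
        (∑ i ∈ Finset.range (n + 1), c i * y ^ p ^ i) = 0 →
      (∑ i ∈ Finset.range (m + 1), b i * (α ^ w₁ * x) ^ p ^ i) +
        (∑ i ∈ Finset.range (n + 1), c i * (β ^ w₂ * y) ^ p ^ i) = 0) :
    ((∀ i ∈ Finset.range (m + 1), b i = 0) ∧ (∀ i ∈ Finset.range (n + 1), c i = 0)) ∧
      ∀ x y : F,
        (∑ i ∈ Finset.range (m + 1), b i * x ^ p ^ i) +
          (∑ i ∈ Finset.range (n + 1), c i * y ^ p ^ i) = 0 :=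
  additive_polynomial_relation_trivial_general F p hp w₁ w₂ hw₁ hw₂ m n b c hproj₁ hproj₂ hstab

end Carlitz
end
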